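/- arXiv:1711.05672 — 10 statements merged into one kernel-verified Lean document; each statement's English description precedes it below -/
import Mathlib

section
/- Let X be a compact Hausdorff space that is locally connected, and let T be a topological group acting continuously on X. Then the equicontinuous structure relation S_eq of the flow (X,T) is monotone, i.e. every equivalence class of S_eq is a connected subset of X; equivalently, the factor map from X to the maximal equicontinuous factor X/S_eq has connected point preimages. -/
/-!
Let `R` be the refinement of `S_eq` whose classes are the connected components of the
`S_eq`-classes. In a compact Hausdorff space `R` is closed (components of a compact set are its
quasi-components), and it is invariant, so by minimality of `S_eq` it suffices to show that the
quotient flow by `R` is equicontinuous.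

Fix an open neighbourhood `η` of `R`. Since components are quasi-components, each `S_eq`-class
has a neighbourhood all of whose preconnected subsets `D` satisfy `D × D ⊆ η`; a Lebesgue number
for the corresponding cover of `X/S_eq` shows that every preconnected set whose image in `X/S_eq`
is uniformly small is `η`-small. By local connectedness `R` is covered by squares of open
connected sets with small image in `X/S_eq`, and equicontinuity of `X/S_eq` keeps the images of
their translates small, so the translates are `η`-small.
-/

open Topology

/-- The quotient flow of the action of `T` on `X` by a `T`-invariant equivalence
relation `S` is equicontinuous, with respect to the unique uniformity of the (compact
Hausdorff) quotient, which consists of all neighbourhoods of the diagonal: for every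
neighbourhood `η` of the diagonal of `X/S` there is a neighbourhood `δ` of the diagonal
such that for all `t ∈ T`, the induced map `f^t` of `X/S` maps `δ` into `η`. Since the
quotient map is surjective and the induced action satisfies `t • ⟦x⟧ = ⟦t • x⟧`, this is
expressed via representatives. -/
def QuotientFlowEquicontinuous (T : Type*) {X : Type*} [TopologicalSpace X] [Group T]
    [MulAction T X] (S : Setoid X) : Prop :=
  ∀ η ∈ 𝓝ˢ (Set.diagonal (Quotient S)), ∃ δ ∈ 𝓝ˢ (Set.diagonal (Quotient S)),
    ∀ (t : T) (x y : X), (Quotient.mk S x, Quotient.mk S y) ∈ δ →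
      (Quotient.mk S (t • x), Quotient.mk S (t • y)) ∈ η

open Set

section CompactHausdorff

variable {X : Type*} [TopologicalSpace X] [CompactSpace X] [T2Space X]

theorem exists_isClopen_subset_of_connectedComponent_subset {x : X} {U : Set X} (hU : IsOpen U)
    (h : connectedComponent x ⊆ U) : ∃ A, IsClopen A ∧ x ∈ A ∧ A ⊆ U := by
  rw [connectedComponent_eq_iInter_isClopen, ← compl_subset_compl, compl_iInter] at h
  obtain ⟨t, ht⟩ := hU.isClosed_compl.isCompact.elim_finite_subcover
    (fun s : {s : Set X // IsClopen s ∧ x ∈ s} => (s : Set X)ᶜ)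
    (fun s => s.2.1.isClosed.isOpen_compl) h
  refine ⟨⋂ s ∈ t, (s : Set X), isClopen_biInter_finset fun s _ => s.2.1,
    mem_iInter₂.2 fun s _ => s.2.2, ?_⟩
  rwa [← compl_subset_compl, compl_iInter₂]

theorem IsClosed.exists_isOpen_separation_of_connectedComponentIn_subset {F : Set X}
    (hF : IsClosed F) {z : X} (hz : z ∈ F) {U : Set X} (hU : IsOpen U)
    (h : connectedComponentIn F z ⊆ U) :
    ∃ G H : Set X, IsOpen G ∧ IsOpen H ∧ z ∈ G ∧ G ⊆ U ∧ F ⊆ G ∪ H ∧ Disjoint G H := by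
  have : CompactSpace F := isCompact_iff_compactSpace.mp hF.isCompact
  obtain ⟨A, hA, hzA, hAU⟩ := exists_isClopen_subset_of_connectedComponent_subset
    (x := ⟨z, hz⟩) (hU.preimage continuous_subtype_val)
    (by rwa [connectedComponentIn_eq_image hz, image_subset_iff] at h)
  have hclosed := hF.isClosedEmbedding_subtypeVal.isClosedMap
  obtain ⟨G, H, hG, hH, hAG, hAH, hGH⟩ := normal_separation (hclosed _ hA.isClosed)
    (hclosed _ hA.compl.isClosed)
    (disjoint_image_of_injective Subtype.val_injective disjoint_compl_right)
  refine ⟨G ∩ U, H, hG.inter hU, hH, ⟨hAG ⟨_, hzA, rfl⟩, hAU hzA⟩, inter_subset_right,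
    fun w hw => ?_, hGH.mono_left inter_subset_left⟩
  by_cases hwA : (⟨w, hw⟩ : F) ∈ A
  · exact Or.inl ⟨hAG ⟨_, hwA, rfl⟩, hAU hwA⟩
  · exact Or.inr (hAH ⟨_, hwA, rfl⟩)

theorem IsClosed.exists_isOpen_forall_isPreconnected_prod_subset {F : Set X} (hF : IsClosed F)
    {η : Set (X × X)} (hη : IsOpen η)
    (h : ∀ z ∈ F, connectedComponentIn F z ×ˢ connectedComponentIn F z ⊆ η) :
    ∃ W, IsOpen W ∧ F ⊆ W ∧ ∀ D ⊆ W, IsPreconnected D → D ×ˢ D ⊆ η := by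
  have : CompactSpace F := isCompact_iff_compactSpace.mp hF.isCompact
  have hsep : ∀ z ∈ F, ∃ G H : Set X, IsOpen G ∧ IsOpen H ∧ z ∈ G ∧ G ×ˢ G ⊆ η ∧
      F ⊆ G ∪ H ∧ Disjoint G H := by
    intro z hz
    have hC : IsCompact (connectedComponentIn F z) := by
      rw [connectedComponentIn_eq_image hz]
      exact isClosed_connectedComponent.isCompact.image continuous_subtype_val
    obtain ⟨u, v, hu, hv, hCu, hCv, huv⟩ := generalized_tube_lemma hC hC hη (h z hz)
    obtain ⟨G, H, hG, hH, hzG, hGuv, hFGH, hGH⟩ :=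
      hF.exists_isOpen_separation_of_connectedComponentIn_subset hz (hu.inter hv)
        (subset_inter hCu hCv)
    exact ⟨G, H, hG, hH, hzG, fun p hp => huv ⟨(hGuv hp.1).1, (hGuv hp.2).2⟩, hFGH, hGH⟩
  choose! G H hG hH hzG hGη hFGH hGH using hsep
  obtain ⟨s, hsF, hFs⟩ :=
    hF.isCompact.elim_nhds_subcover G fun z hz => (hG z hz).mem_nhds (hzG z hz)
  refine ⟨(⋃ z ∈ s, G z) ∩ ⋂ z ∈ s, (G z ∪ H z),
    (isOpen_biUnion fun z hz => hG z (hsF z hz)).inter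
      (isOpen_biInter_finset fun z hz => (hG z (hsF z hz)).union (hH z (hsF z hz))),
    fun w hw => ⟨hFs hw, mem_iInter₂.2 fun z hz => hFGH z (hsF z hz) hw⟩, ?_⟩
  rintro D hDW hD ⟨u, v⟩ ⟨hu, hv⟩
  obtain ⟨z, hz, huz⟩ := mem_iUnion₂.1 (hDW hu).1
  have hDG : D ⊆ G z := hD.subset_left_of_subset_union (hG z (hsF z hz)) (hH z (hsF z hz))
    (hGH z (hsF z hz)) (fun d hd => mem_iInter₂.1 (hDW hd).2 z hz) ⟨u, hu, huz⟩
  exact hGη z (hsF z hz) ⟨hDG hu, hDG hv⟩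

end CompactHausdorff

theorem lebesgue_number_lemma_nhdsSet_diagonal {Y ι : Type*} [TopologicalSpace Y]
    [CompactSpace Y] [R1Space Y] {U : ι → Set Y} (hU : ∀ i, IsOpen (U i))
    (hcover : ⋃ i, U i = univ) :
    ∃ γ ∈ 𝓝ˢ (diagonal Y), ∀ y, ∃ i, {z | (y, z) ∈ γ} ⊆ U i := by
  let : UniformSpace Y := uniformSpaceOfCompactR1
  rw [nhdsSet_diagonal_eq_uniformity]
  obtain ⟨V, hV, hVU⟩ := lebesgue_number_lemma isCompact_univ hU hcover.ge
  exact ⟨V, hV, fun y => hVU y (mem_univ y)⟩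

namespace Setoid

variable {X : Type*} (S : Setoid X)

theorem setOf_r_eq_of_r {x y : X} (h : S.r x y) : {z | S.r x z} = {z | S.r y z} :=
  Set.ext fun _ => ⟨S.trans (S.symm h), S.trans h⟩

theorem mk_mem_compl_image_compl_iff {W : Set X} {x : X} :
    Quotient.mk S x ∈ (Quotient.mk S '' Wᶜ)ᶜ ↔ {y | S.r x y} ⊆ W := by
  simp only [mem_compl_iff, mem_image, Quotient.eq, not_exists, not_and, not_imp_not]
  exact ⟨fun h y hxy => h y (S.symm hxy), fun h y hyx => h (S.symm hyx)⟩

variable [TopologicalSpace X] {S}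

theorem isClosedMap_mk [CompactSpace X] (hS : IsClosed {p : X × X | S.r p.1 p.2}) :
    IsClosedMap (Quotient.mk S) := by
  intro C hC
  rw [← isQuotientMap_quotient_mk'.isClosed_preimage]
  change IsClosed (Quotient.mk S ⁻¹' _)
  have hsat : Quotient.mk S ⁻¹' (Quotient.mk S '' C) =
      Prod.snd '' ({p : X × X | S.r p.1 p.2} ∩ C ×ˢ univ) := by
    ext y
    simp only [mem_preimage, mem_image, Quotient.eq, mem_inter_iff, mem_prod,
      mem_univ, and_true, Prod.exists, exists_eq_right]
    exact ⟨fun ⟨c, hc, hcy⟩ => ⟨c, hcy, hc⟩, fun ⟨c, hcy, hc⟩ => ⟨c, hc, hcy⟩⟩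
  rw [hsat]
  exact isClosedMap_snd_of_compactSpace _ (hS.inter (hC.prod isClosed_univ))

theorem isClosed_setOf_r (hS : IsClosed {p : X × X | S.r p.1 p.2}) (x : X) :
    IsClosed {y | S.r x y} :=
  hS.preimage (Continuous.prodMk_right x)

theorem isOpen_setOf_subset [CompactSpace X] (hS : IsClosed {p : X × X | S.r p.1 p.2})
    {W : Set X} (hW : IsOpen W) : IsOpen {x | {y | S.r x y} ⊆ W} := by
  have : {x | {y | S.r x y} ⊆ W} = Quotient.mk S ⁻¹' (Quotient.mk S '' Wᶜ)ᶜ :=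
    Set.ext fun _ => (S.mk_mem_compl_image_compl_iff).symm
  rw [this]
  exact (isClosedMap_mk hS _ hW.isClosed_compl).isOpen_compl.preimage continuous_quot_mk

theorem t2Space_quotient [CompactSpace X] [T2Space X]
    (hS : IsClosed {p : X × X | S.r p.1 p.2}) : T2Space (Quotient S) := by
  refine ⟨Quotient.ind₂ fun x y hxy => ?_⟩
  obtain ⟨u, v, hu, hv, hxu, hyv, huv⟩ :=
    normal_separation (isClosed_setOf_r hS x) (isClosed_setOf_r hS y)
    (disjoint_left.2 fun z hxz hyz => hxy (Quotient.sound (S.trans hxz (S.symm hyz))))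
  have hopen : ∀ {W : Set X}, IsOpen W → IsOpen (Quotient.mk S '' Wᶜ)ᶜ :=
    fun hW => (isClosedMap_mk hS _ hW.isClosed_compl).isOpen_compl
  refine ⟨_, _, hopen hu, hopen hv, S.mk_mem_compl_image_compl_iff.2 hxu,
    S.mk_mem_compl_image_compl_iff.2 hyv, disjoint_compl_left_iff_subset.2 ?_⟩
  rintro ⟨z⟩ hq
  exact ⟨z, fun hzu => hq ⟨z, fun hzv => huv.le_bot ⟨hzu, hzv⟩, rfl⟩, rfl⟩

def componentRefinement (S : Setoid X) : Setoid X where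
  r x y := y ∈ connectedComponentIn {z | S.r x z} x
  iseqv.refl x := mem_connectedComponentIn (S.refl x)
  iseqv.symm {x y} h := by
    rw [← S.setOf_r_eq_of_r (connectedComponentIn_subset _ _ h), ← connectedComponentIn_eq h]
    exact mem_connectedComponentIn (S.refl x)
  iseqv.trans {x y z} hxy hyz := by
    rwa [connectedComponentIn_eq hxy, S.setOf_r_eq_of_r (connectedComponentIn_subset _ _ hxy)]

theorem componentRefinement_le : S.componentRefinement ≤ S :=
  fun _ _ h => connectedComponentIn_subset _ _ h

theorem isConnected_setOf_componentRefinement_r (x : X) :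
    IsConnected {y | S.componentRefinement.r x y} :=
  isConnected_connectedComponentIn_iff.2 (S.refl x)

theorem isClosed_componentRefinement [CompactSpace X] [T2Space X]
    (hS : IsClosed {p : X × X | S.r p.1 p.2}) :
    IsClosed {p : X × X | S.componentRefinement.r p.1 p.2} := by
  rw [← isOpen_compl_iff, isOpen_iff_mem_nhds]
  rintro ⟨x, y⟩ hxy
  by_cases hS_xy : S.r x y
  case neg =>
    exact Filter.mem_of_superset (hS.isOpen_compl.mem_nhds hS_xy)
      fun p hp hRp => hp (componentRefinement_le hRp)
  case pos =>
    obtain ⟨G, H, hG, hH, hxG, hGy, hFGH, hGH⟩ :=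
      (isClosed_setOf_r hS x).exists_isOpen_separation_of_connectedComponentIn_subset
        (S.refl x) isClosed_singleton.isOpen_compl
        fun z hz hzy => hxy (by rwa [mem_singleton_iff.1 hzy] at hz)
    have hyH : y ∈ H := (hFGH hS_xy).resolve_left fun hyG => hGy hyG rfl
    -- classes near that of `x` still lie in `G ∪ H`, so their components through `G` stay in `G`
    refine Filter.mem_of_superset (((isOpen_setOf_subset hS (hG.union hH)).inter hG).prod hH
      |>.mem_nhds ⟨⟨hFGH, hxG⟩, hyH⟩) ?_
    rintro ⟨x', y'⟩ ⟨⟨hx'GH, hx'G⟩, hy'H⟩ hR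
    have hCG : connectedComponentIn {z | S.r x' z} x' ⊆ G :=
      isPreconnected_connectedComponentIn.subset_left_of_subset_union hG hH hGH
        ((connectedComponentIn_subset _ _).trans hx'GH)
        ⟨x', mem_connectedComponentIn (S.refl x'), hx'G⟩
    exact hGH.le_bot ⟨hCG hR, hy'H⟩

theorem componentRefinement_smul_image {T : Type*} [Group T] [MulAction T X]
    [ContinuousConstSMul T X]
    (hinv : ∀ (t : T) (x : X), (t • ·) '' {y | S.r x y} = {y | S.r (t • x) y}) (t : T) (x : X) :
    (t • ·) '' {y | S.componentRefinement.r x y} = {y | S.componentRefinement.r (t • x) y} := by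
  change (t • ·) '' connectedComponentIn _ x = connectedComponentIn _ (t • x)
  rw [← hinv t x]
  exact (Homeomorph.smul t).image_connectedComponentIn (S.refl x)

theorem exists_mem_nhdsSet_diagonal_forall_isPreconnected [CompactSpace X] [T2Space X]
    (hS : IsClosed {p : X × X | S.r p.1 p.2}) {η : Set (X × X)} (hη : IsOpen η)
    (hR : ∀ x y, S.componentRefinement.r x y → (x, y) ∈ η) :
    ∃ γ ∈ 𝓝ˢ (diagonal (Quotient S)), ∀ (x : X) (D : Set X), IsPreconnected D →
      (∀ d ∈ D, (Quotient.mk S x, Quotient.mk S d) ∈ γ) → D ×ˢ D ⊆ η := by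
  have hW : ∀ x : X, ∃ W, IsOpen W ∧ {y | S.r x y} ⊆ W ∧
      ∀ D ⊆ W, IsPreconnected D → D ×ˢ D ⊆ η := by
    intro x
    refine (isClosed_setOf_r hS x).exists_isOpen_forall_isPreconnected_prod_subset hη
      fun z hz => ?_
    rintro ⟨u, v⟩ ⟨hu, hv⟩
    rw [S.setOf_r_eq_of_r hz] at hu hv
    exact hR u v (S.componentRefinement.trans (S.componentRefinement.symm hu) hv)
  choose W hWo hxW hWη using hW
  have := t2Space_quotient hS
  obtain ⟨γ, hγ, hγW⟩ := lebesgue_number_lemma_nhdsSet_diagonal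
    (U := fun x => (Quotient.mk S '' (W x)ᶜ)ᶜ)
    (fun x => (isClosedMap_mk hS _ (hWo x).isClosed_compl).isOpen_compl)
    (eq_univ_of_forall <| Quotient.ind fun x =>
      mem_iUnion.2 ⟨x, S.mk_mem_compl_image_compl_iff.2 (hxW x)⟩)
  refine ⟨γ, hγ, fun x D hD hDγ => ?_⟩
  obtain ⟨y, hy⟩ := hγW (Quotient.mk S x)
  exact hWη y D (fun d hd => S.mk_mem_compl_image_compl_iff.1 (hy (hDγ d hd)) (S.refl d)) hD

theorem exists_isOpen_componentRefinement_subset [LocallyConnectedSpace X] {δ : Set (Quotient S × Quotient S)}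
    (hδ : δ ∈ 𝓝ˢ (diagonal (Quotient S))) :
    ∃ δ' : Set (X × X), IsOpen δ' ∧ (∀ x y, S.componentRefinement.r x y → (x, y) ∈ δ') ∧
      ∀ p ∈ δ', ∃ (x : X) (C : Set X), IsPreconnected C ∧ p.1 ∈ C ∧ p.2 ∈ C ∧
        ∀ c ∈ C, (Quotient.mk S x, Quotient.mk S c) ∈ δ := by
  obtain ⟨w, hw, hdiag, hwδ⟩ := mem_nhdsSet_iff_exists.1 hδ
  set C : X → Set X := fun x =>
    connectedComponentIn (Quotient.mk S ⁻¹' {q | (Quotient.mk S x, q) ∈ w}) x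
  have hC : ∀ x, IsOpen (C x) := fun x =>
    ((hw.preimage (Continuous.prodMk_right _)).preimage continuous_quot_mk).connectedComponentIn
  have hclass : ∀ x, {y | S.r x y} ⊆ Quotient.mk S ⁻¹' {q | (Quotient.mk S x, q) ∈ w} :=
    fun x y hxy => (Quotient.sound hxy : Quotient.mk S x = _) ▸ hdiag (mem_diagonal _)
  refine ⟨⋃ x, C x ×ˢ C x, isOpen_iUnion fun x => (hC x).prod (hC x),
    fun x y hxy => mem_iUnion.2 ⟨x, mem_connectedComponentIn (hclass x (S.refl x)),
      connectedComponentIn_mono x (hclass x) hxy⟩, ?_⟩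
  rintro ⟨u, v⟩ huv
  obtain ⟨x, hu, hv⟩ := mem_iUnion.1 huv
  exact ⟨x, C x, isPreconnected_connectedComponentIn, hu, hv,
    fun c hc => hwδ (connectedComponentIn_subset _ x hc)⟩

theorem exists_mem_nhdsSet_diagonal_forall_mk_mem [CompactSpace X] [T2Space (Quotient S)]
    {δ' : Set (X × X)} (hδ' : IsOpen δ') (h : ∀ x y, S.r x y → (x, y) ∈ δ') :
    ∃ δ ∈ 𝓝ˢ (diagonal (Quotient S)), ∀ x y,
      (Quotient.mk S x, Quotient.mk S y) ∈ δ → (x, y) ∈ δ' := by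
  have hπ : Continuous (Prod.map (Quotient.mk S) (Quotient.mk S)) :=
    continuous_quot_mk.prodMap continuous_quot_mk
  refine ⟨(Prod.map (Quotient.mk S) (Quotient.mk S) '' δ'ᶜ)ᶜ,
    (hδ'.isClosed_compl.isCompact.image hπ).isClosed.isOpen_compl.mem_nhdsSet.2 ?_,
    fun x y hxy => not_not.1 fun hn => hxy ⟨(x, y), hn, rfl⟩⟩
  rintro ⟨a, b⟩ hab ⟨⟨x, y⟩, hxy, he⟩
  obtain ⟨rfl, rfl⟩ := Prod.mk.inj he
  exact hxy (h x y (Quotient.exact hab))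

theorem quotientFlowEquicontinuous_componentRefinement {T : Type*} [CompactSpace X] [T2Space X]
    [LocallyConnectedSpace X] [Group T] [MulAction T X] [ContinuousConstSMul T X]
    (hS : IsClosed {p : X × X | S.r p.1 p.2}) (h : QuotientFlowEquicontinuous T S) :
    QuotientFlowEquicontinuous T S.componentRefinement := by
  set R := S.componentRefinement
  have := t2Space_quotient (isClosed_componentRefinement hS)
  intro η hη
  obtain ⟨η₀, hη₀, hdiag, hη₀η⟩ := mem_nhdsSet_iff_exists.1 hη
  obtain ⟨γ, hγ, hγη₀⟩ := exists_mem_nhdsSet_diagonal_forall_isPreconnected hS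
    (η := Prod.map (Quotient.mk R) (Quotient.mk R) ⁻¹' η₀)
    (hη₀.preimage (continuous_quot_mk.prodMap continuous_quot_mk))
    fun x y hxy => hdiag (Quotient.sound hxy : Quotient.mk R x = _)
  obtain ⟨δS, hδS, hδSγ⟩ := h γ hγ
  obtain ⟨δ', hδ', hRδ', hδ'C⟩ := exists_isOpen_componentRefinement_subset hδS
  obtain ⟨δ, hδ, hδδ'⟩ := exists_mem_nhdsSet_diagonal_forall_mk_mem hδ' hRδ'
  refine ⟨δ, hδ, fun t u v huv => hη₀η ?_⟩
  obtain ⟨x, C, hC, huC, hvC, hCδS⟩ := hδ'C _ (hδδ' u v huv)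
  exact hγη₀ (t • x) ((t • ·) '' C) (hC.image _ (continuous_const_smul t).continuousOn)
    (forall_mem_image.2 fun c hc => hδSγ t x c (hCδS c hc))
    (mk_mem_prod (mem_image_of_mem (t • ·) huC) (mem_image_of_mem (t • ·) hvC))

end Setoid

theorem stmt0_general {T X : Type*} [TopologicalSpace X] [CompactSpace X] [T2Space X]
    [LocallyConnectedSpace X] [TopologicalSpace T] [Group T]
    [MulAction T X] [ContinuousSMul T X]
    (Seq : Setoid X)
    -- `Seq` is closed
    (hcl : IsClosed {p : X × X | Seq.r p.1 p.2})
    -- `Seq` is `T`-invariant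
    (hinv : ∀ (t : T) (x : X), (t • ·) '' {y | Seq.r x y} = {y | Seq.r (t • x) y})
    -- the quotient flow `(X/Seq, T)` is equicontinuous
    (heq : QuotientFlowEquicontinuous T Seq)
    -- `Seq` is the smallest such relation
    (hmin : ∀ R : Setoid X, IsClosed {p : X × X | R.r p.1 p.2} →
      (∀ (t : T) (x : X), (t • ·) '' {y | R.r x y} = {y | R.r (t • x) y}) →
      QuotientFlowEquicontinuous T R → ∀ x y : X, Seq.r x y → R.r x y) :
    ∀ x : X, IsConnected {y | Seq.r x y} := by
  have hle := hmin _ (Seq.isClosed_componentRefinement hcl)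
    (Seq.componentRefinement_smul_image hinv)
    (Seq.quotientFlowEquicontinuous_componentRefinement hcl heq)
  intro x
  have hclass : {y | Seq.r x y} = {y | Seq.componentRefinement.r x y} :=
    Subset.antisymm (fun y hy => hle x y hy) fun _ hy => Seq.componentRefinement_le hy
  rw [hclass]
  exact Seq.isConnected_setOf_componentRefinement_r x

/-- Let `X` be a locally connected compact Hausdorff space and `T` a
topological group acting continuously on `X`. Then the equicontinuous structure
relation `Seq` — the smallest closed `T`-invariant equivalence relation on `X` whose
quotient flow is equicontinuous — is monotone: every equivalence class of `Seq`, i.e.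
every point preimage of the factor map onto the maximal equicontinuous factor `X/Seq`,
is connected. -/
theorem stmt0 {T X : Type*} [TopologicalSpace X] [CompactSpace X] [T2Space X]
    [LocallyConnectedSpace X] [TopologicalSpace T] [Group T] [IsTopologicalGroup T]
    [MulAction T X] [ContinuousSMul T X]
    (Seq : Setoid X)
    -- `Seq` is closed
    (hcl : IsClosed {p : X × X | Seq.r p.1 p.2})
    -- `Seq` is `T`-invariant
    (hinv : ∀ (t : T) (x : X), (t • ·) '' {y | Seq.r x y} = {y | Seq.r (t • x) y})
    -- the quotient flow `(X/Seq, T)` is equicontinuous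
    (heq : QuotientFlowEquicontinuous T Seq)
    -- `Seq` is the smallest such relation
    (hmin : ∀ R : Setoid X, IsClosed {p : X × X | R.r p.1 p.2} →
      (∀ (t : T) (x : X), (t • ·) '' {y | R.r x y} = {y | R.r (t • x) y}) →
      QuotientFlowEquicontinuous T R → ∀ x y : X, Seq.r x y → R.r x y) :
    ∀ x : X, IsConnected {y | Seq.r x y} :=
  stmt0_general Seq hcl hinv heq hmin
end

section
/- Let (X,T) be a flow on a compact Hausdorff space X and let S be a reflexive and monotone binary relation on X. Let Ŝ be the smallest closed T-invariant equivalence relation on X containing S. Then Ŝ is monotone, i.e. every equivalence class of Ŝ is connected. -/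
/-!
Refine `Shat` to the relation "`y` lies in the connected component of `x` inside the
`Shat`-class of `x`". This refinement is again a `T`-invariant equivalence relation, and it
contains `S` because the sections of `S` are connected and contain their base point. It is
also closed: classes of a closed relation on a compact space vary upper semicontinuously, and
in a compact Hausdorff space a point outside a component is separated from it by a
disjoint open cover. By minimality of `Shat` the refinement is all of `Shat`, so every class
is a connected component of itself.
-/

open Set

theorem IsClosed.isOpen_setOf_mk_preimage_subset {X Y : Type*} [TopologicalSpace X]
    [TopologicalSpace Y] [CompactSpace Y] {G : Set (X × Y)} (hG : IsClosed G) {W : Set Y}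
    (hW : IsOpen W) : IsOpen {x | Prod.mk x ⁻¹' G ⊆ W} := by
  have hcompl : {x | Prod.mk x ⁻¹' G ⊆ W}ᶜ = Prod.fst '' (G ∩ univ ×ˢ Wᶜ) := by
    ext x
    simp [not_subset, and_comm]
  rw [← isClosed_compl_iff, hcompl]
  exact isClosedMap_fst_of_compactSpace _ (hG.inter (isClosed_univ.prod hW.isClosed_compl))

theorem IsCompact.exists_open_separation_of_notMem_connectedComponentIn {X : Type*}
    [TopologicalSpace X] [T2Space X] {K : Set X} (hK : IsCompact K) {x y : X} (hx : x ∈ K)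
    (hy : y ∈ K) (hxy : y ∉ connectedComponentIn K x) :
    ∃ U V : Set X,
      IsOpen U ∧ IsOpen V ∧ Disjoint U V ∧ K ⊆ U ∪ V ∧ x ∈ U ∧ y ∈ V := by
  have : CompactSpace K := isCompact_iff_compactSpace.mp hK
  obtain ⟨⟨Z, hZ, hxZ⟩, hyZ⟩ :
      ∃ Z : {Z : Set K // IsClopen Z ∧ ⟨x, hx⟩ ∈ Z}, ⟨y, hy⟩ ∉ Z.1 := by
    rw [connectedComponentIn_eq_image hx] at hxy
    simpa [connectedComponent_eq_iInter_isClopen, and_assoc] using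
      fun h => hxy ⟨⟨y, hy⟩, h, rfl⟩
  obtain ⟨U, V, hU, hV, hZU, hZV, hUV⟩ := SeparatedNhds.of_isCompact_isCompact
    (hZ.isClosed.isCompact.image continuous_subtype_val)
    (hZ.compl.isClosed.isCompact.image continuous_subtype_val)
    (disjoint_image_of_injective Subtype.val_injective disjoint_compl_right)
  refine ⟨U, V, hU, hV, hUV, fun z hz => ?_, hZU ⟨_, hxZ, rfl⟩, hZV ⟨_, hyZ, rfl⟩⟩
  by_cases hzZ : ⟨z, hz⟩ ∈ Z
  · exact Or.inl (hZU ⟨_, hzZ, rfl⟩)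
  · exact Or.inr (hZV ⟨_, hzZ, rfl⟩)

namespace Setoid

variable {X : Type*} [TopologicalSpace X] (s : Setoid X)

theorem connectedComponentIn_setOf_rel_eq {x y : X}
    (h : y ∈ connectedComponentIn {z | s x z} x) :
    connectedComponentIn {z | s y z} y = connectedComponentIn {z | s x z} x := by
  have hxy : s x y := connectedComponentIn_subset _ _ h
  have hclass : {z | s y z} = {z | s x z} := by
    ext z
    exact ⟨s.trans hxy, s.trans (s.symm hxy)⟩
  rw [hclass, connectedComponentIn_eq h]

def componentSetoid : Setoid X where
  r x y := y ∈ connectedComponentIn {z | s x z} x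
  iseqv :=
    { refl x := mem_connectedComponentIn (s.refl x)
      symm {x y} h := by
        rw [s.connectedComponentIn_setOf_rel_eq h]
        exact mem_connectedComponentIn (s.refl x)
      trans {x y z} hxy hyz := by rwa [← s.connectedComponentIn_setOf_rel_eq hxy] }

theorem componentSetoid_le : s.componentSetoid ≤ s :=
  fun _ _ h => connectedComponentIn_subset _ _ h

theorem isClosed_componentSetoid [CompactSpace X] [T2Space X]
    (hs : IsClosed {p : X × X | s p.1 p.2}) :
    IsClosed {p : X × X | s.componentSetoid p.1 p.2} := by
  rw [← isOpen_compl_iff, isOpen_iff_mem_nhds]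
  rintro ⟨x, y⟩ hxy
  by_cases hsxy : s x y
  swap
  · exact Filter.mem_of_superset (hs.isOpen_compl.mem_nhds hsxy)
      fun p hp hr => hp (s.componentSetoid_le hr)
  have hclass : IsCompact {z | s x z} := (hs.preimage (Continuous.prodMk_right x)).isCompact
  obtain ⟨U, V, hU, hV, hUV, hxUV, hxU, hyV⟩ :=
    hclass.exists_open_separation_of_notMem_connectedComponentIn (s.refl x) hsxy hxy
  have hW : IsOpen {x' | Prod.mk x' ⁻¹' {p : X × X | s p.1 p.2} ⊆ U ∪ V} :=
    hs.isOpen_setOf_mk_preimage_subset (hU.union hV)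
  filter_upwards [prod_mem_nhds ((hU.inter hW).mem_nhds ⟨hxU, hxUV⟩) (hV.mem_nhds hyV)]
  rintro ⟨x', y'⟩ ⟨⟨hx'U, hx'UV⟩, hy'V⟩ hr
  have hcompU : connectedComponentIn {z | s x' z} x' ⊆ U :=
    isPreconnected_connectedComponentIn.subset_left_of_subset_union hU hV hUV
      ((connectedComponentIn_subset _ _).trans hx'UV)
      ⟨x', mem_connectedComponentIn (s.refl x'), hx'U⟩
  exact disjoint_left.mp hUV (hcompU hr) hy'V

theorem mapsTo_componentSetoid {f : X → X} (hf : Continuous f)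
    (hs : ∀ x, MapsTo f {y | s x y} {y | s (f x) y}) (x : X) :
    MapsTo f {y | s.componentSetoid x y} {y | s.componentSetoid (f x) y} := fun _ hy =>
  (isPreconnected_connectedComponentIn.image f hf.continuousOn).subset_connectedComponentIn
    (mem_image_of_mem f (mem_connectedComponentIn (s.refl x)))
    ((image_mono (connectedComponentIn_subset _ _)).trans (hs x).image_subset)
    (mem_image_of_mem f hy)

theorem image_smul_componentSetoid {T : Type*} [Group T] [MulAction T X]
    [ContinuousConstSMul T X]
    (hs : ∀ (t : T) (x : X), (t • ·) '' {y | s x y} = {y | s (t • x) y}) (t : T) (x : X) :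
    (t • ·) '' {y | s.componentSetoid x y} = {y | s.componentSetoid (t • x) y} := by
  have hmaps (t : T) := s.mapsTo_componentSetoid (continuous_const_smul t)
    fun x => hs t x ▸ mapsTo_image _ _
  refine (hmaps t x).image_subset.antisymm fun y hy => ⟨t⁻¹ • y, ?_, smul_inv_smul t y⟩
  simpa using hmaps t⁻¹ (t • x) hy

end Setoid

theorem stmt1_general {T X : Type*} [TopologicalSpace X] [CompactSpace X] [T2Space X]
    [TopologicalSpace T] [Group T]
    [MulAction T X] [ContinuousSMul T X]
    (S : Set (X × X))
    (hrefl : ∀ x : X, (x, x) ∈ S)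
    (hmono : ∀ x : X, IsConnected {y | (x, y) ∈ S})
    (Shat : Setoid X)
    -- `Shat` is closed
    (hcl : IsClosed {p : X × X | Shat.r p.1 p.2})
    -- `Shat` is `T`-invariant
    (hinv : ∀ (t : T) (x : X), (t • ·) '' {y | Shat.r x y} = {y | Shat.r (t • x) y})
    -- `Shat` contains `S`
    (hsub : ∀ p ∈ S, Shat.r p.1 p.2)
    -- `Shat` is the smallest such relation
    (hmin : ∀ R : Setoid X, IsClosed {p : X × X | R.r p.1 p.2} →
      (∀ (t : T) (x : X), (t • ·) '' {y | R.r x y} = {y | R.r (t • x) y}) →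
      (∀ p ∈ S, R.r p.1 p.2) → ∀ x y : X, Shat.r x y → R.r x y) :
    ∀ x : X, IsConnected {y | Shat.r x y} := by
  have hS_le : ∀ p ∈ S, Shat.componentSetoid p.1 p.2 := fun p hp =>
    (hmono p.1).isPreconnected.subset_connectedComponentIn (hrefl p.1)
      (fun y hy => hsub (p.1, y) hy) hp
  have hle := hmin _ (Shat.isClosed_componentSetoid hcl) (Shat.image_smul_componentSetoid hinv)
    hS_le
  intro x
  have hclass : {y | Shat.r x y} = connectedComponentIn {y | Shat x y} x :=
    subset_antisymm (hle x) (connectedComponentIn_subset _ _)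
  rw [hclass]
  exact isConnected_connectedComponentIn_iff.2 (Shat.refl x)

/-- Let `(X,T)` be a flow on a compact Hausdorff space `X` (a topological
group `T` acting continuously on `X`) and let `S` be a reflexive and monotone binary
relation on `X` (monotone: every section `{y | (x,y) ∈ S}` is connected). If `Shat` is
the smallest closed `T`-invariant equivalence relation on `X` containing `S`, then
`Shat` is monotone: every equivalence class of `Shat` is connected. -/
theorem stmt1 {T X : Type*} [TopologicalSpace X] [CompactSpace X] [T2Space X]
    [TopologicalSpace T] [Group T] [IsTopologicalGroup T]
    [MulAction T X] [ContinuousSMul T X]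
    (S : Set (X × X))
    (hrefl : ∀ x : X, (x, x) ∈ S)
    (hmono : ∀ x : X, IsConnected {y | (x, y) ∈ S})
    (Shat : Setoid X)
    -- `Shat` is closed
    (hcl : IsClosed {p : X × X | Shat.r p.1 p.2})
    -- `Shat` is `T`-invariant
    (hinv : ∀ (t : T) (x : X), (t • ·) '' {y | Shat.r x y} = {y | Shat.r (t • x) y})
    -- `Shat` contains `S`
    (hsub : ∀ p ∈ S, Shat.r p.1 p.2)
    -- `Shat` is the smallest such relation
    (hmin : ∀ R : Setoid X, IsClosed {p : X × X | R.r p.1 p.2} →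
      (∀ (t : T) (x : X), (t • ·) '' {y | R.r x y} = {y | R.r (t • x) y}) →
      (∀ p ∈ S, R.r p.1 p.2) → ∀ x y : X, Shat.r x y → R.r x y) :
    ∀ x : X, IsConnected {y | Shat.r x y} :=
  stmt1_general S hrefl hmono Shat hcl hinv hsub hmin
end

section
/- Let (X,T) be a flow on a compact, locally connected Hausdorff space X. Then the regionally proximal relation S_rp of (X,T) is monotone, i.e. for every x in X the set {y : (x,y) in S_rp} is connected. -/
/-!
On a compact Hausdorff space the closure of a reflexive relation `R` with connected sections
again has connected sections. Suppose the section of `closure R` at `x` is covered by disjoint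
open sets `U ∋ x` and `V` and meets `V` in `c`. Sections of a closed relation are upper
semicontinuous (tube lemma), so a pair `(x', c') ∈ R` close enough to `(x, c)` has its whole
`R`-section inside `U ∪ V`; that section contains `x' ∈ U` and `c' ∈ V`, contradicting its
connectedness.

Local connectedness gives a basis of neighbourhoods `β` of the diagonal with connected sections.
Then `β T` is reflexive with connected sections, so the sections of `closure (β T)` are compact
and connected, and they form a directed family whose intersection is the section of `S_rp`;
a directed intersection of compact connected sets in a Hausdorff space is connected.
-/

open Topology

/-- The regionally proximal relation of a flow given by an action of a topological
group `T` on a compact Hausdorff space `X`: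
`S_rp = ⋂_{α ∈ 𝒰_X} closure (α T)` where `𝒰_X` is the collection of all neighbourhoods
of the diagonal (the unique uniformity on `X`) and
`α T = ⋃_{t ∈ T} {(t • x, t • y) | (x, y) ∈ α}`. -/
def regionallyProximal (T : Type*) {X : Type*} [TopologicalSpace X] [Group T]
    [MulAction T X] : Set (X × X) :=
  ⋂ α ∈ {s : Set (X × X) | s ∈ 𝓝ˢ (Set.diagonal X)},
    closure (⋃ t : T, (fun p : X × X => (t • p.1, t • p.2)) '' α)

open Set Filter Pointwise

section Sections

variable {X : Type*} [TopologicalSpace X]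

theorem IsCompact.isPreconnected_of_subset_or_subset [T2Space X] {s : Set X} (hs : IsCompact s)
    (h : ∀ U V, IsOpen U → IsOpen V → Disjoint U V → s ⊆ U ∪ V → s ⊆ U ∨ s ⊆ V) :
    IsPreconnected s := by
  rw [isPreconnected_iff_subset_of_fully_disjoint_closed hs.isClosed]
  intro u v hu hv hsuv huv
  obtain ⟨U, V, hU, hV, huU, hvV, hUV⟩ := SeparatedNhds.of_isCompact_isCompact
    (hs.inter_right hu) (hs.inter_right hv) (huv.mono inter_subset_right inter_subset_right)
  have hsUV : s ⊆ U ∪ V := fun y hy =>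
    (hsuv hy).imp (fun hyu => huU ⟨hy, hyu⟩) (fun hyv => hvV ⟨hy, hyv⟩)
  refine (h U V hU hV hUV hsUV).imp (fun hsU y hy => ?_) (fun hsV y hy => ?_)
  · exact (hsuv hy).resolve_right fun hyv => hUV.ne_of_mem (hsU hy) (hvV ⟨hy, hyv⟩) rfl
  · exact (hsuv hy).resolve_left fun hyu => hUV.ne_of_mem (huU ⟨hy, hyu⟩) (hsV hy) rfl

theorem isPreconnected_iInter_of_directed [T2Space X] {ι : Type*} [Nonempty ι] {Q : ι → Set X}
    (hdir : Directed (· ⊇ ·) Q) (hcpt : ∀ i, IsCompact (Q i))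
    (hconn : ∀ i, IsPreconnected (Q i)) : IsPreconnected (⋂ i, Q i) := by
  obtain ⟨i₀⟩ := ‹Nonempty ι›
  have hcpt_iInter : IsCompact (⋂ i, Q i) :=
    (hcpt i₀).of_isClosed_subset (isClosed_iInter fun i => (hcpt i).isClosed)
      (iInter_subset Q i₀)
  refine hcpt_iInter.isPreconnected_of_subset_or_subset fun U V hU hV hUV hsub => ?_
  obtain ⟨i, hi⟩ := exists_subset_nhds_of_isCompact hdir hcpt
    fun y hy => (hU.union hV).mem_nhds (hsub hy)
  exact ((hconn i).subset_or_subset hU hV hUV hi).imp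
    (iInter_subset Q i).trans (iInter_subset Q i).trans

theorem IsClosed.eventually_section_subset {Y : Type*} [TopologicalSpace Y] [CompactSpace Y]
    {S : Set (X × Y)} (hS : IsClosed S) {W : Set Y} (hW : IsOpen W) {x : X}
    (hx : {y | (x, y) ∈ S} ⊆ W) : ∀ᶠ x' in 𝓝 x, {y | (x', y) ∈ S} ⊆ W := by
  have hclosed : IsClosed (Prod.fst '' (S ∩ Prod.snd ⁻¹' Wᶜ)) :=
    isClosedMap_fst_of_compactSpace _ (hS.inter (hW.isClosed_compl.preimage continuous_snd))
  have hx_notMem : x ∉ Prod.fst '' (S ∩ Prod.snd ⁻¹' Wᶜ) := by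
    rintro ⟨⟨_, y⟩, ⟨hy, hyW⟩, rfl⟩
    exact hyW (hx hy)
  filter_upwards [hclosed.isOpen_compl.mem_nhds hx_notMem] with x' hx' y hy
  by_contra hyW
  exact hx' ⟨(x', y), ⟨hy, hyW⟩, rfl⟩

theorem isPreconnected_section_iUnion {ι : Sort*} {R : ι → Set (X × X)}
    (hR : ∀ i, diagonal X ⊆ R i) (hconn : ∀ i z, IsPreconnected {y | (z, y) ∈ R i})
    (z : X) : IsPreconnected {y | (z, y) ∈ ⋃ i, R i} := by
  simp only [mem_iUnion, ofPred_exists]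
  exact isPreconnected_iUnion ⟨z, mem_iInter.2 fun i => hR i (mem_diagonal z)⟩ (hconn · z)

theorem isPreconnected_section_closure [CompactSpace X] [T2Space X] {R : Set (X × X)}
    (hR : diagonal X ⊆ R) (hconn : ∀ z, IsPreconnected {y | (z, y) ∈ R}) (x : X) :
    IsPreconnected {y | (x, y) ∈ closure R} := by
  have hclosed : IsClosed {y | (x, y) ∈ closure R} :=
    isClosed_closure.preimage (Continuous.prodMk_right x)
  have subset_left_of_mem : ∀ U V, IsOpen U → IsOpen V → Disjoint U V →
      {y | (x, y) ∈ closure R} ⊆ U ∪ V → x ∈ U → {y | (x, y) ∈ closure R} ⊆ U := by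
    intro U V hU hV hUV hsub hxU c hc
    by_contra hcU
    have hcV : c ∈ V := (hsub hc).resolve_left hcU
    have hnear : ∀ᶠ x' in 𝓝 x, x' ∈ U ∧ {y | (x', y) ∈ closure R} ⊆ U ∪ V :=
      (hU.eventually_mem hxU).and (isClosed_closure.eventually_section_subset (hU.union hV) hsub)
    obtain ⟨⟨x', c'⟩, ⟨⟨hx'U, hx'sub⟩, hc'V⟩, hxc'⟩ :=
      mem_closure_iff_nhds.1 hc _ (prod_mem_nhds hnear (hV.mem_nhds hcV))
    rcases (hconn x').subset_or_subset hU hV hUV fun y hy => hx'sub (subset_closure hy) with h | h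
    · exact hUV.ne_of_mem (h hxc') hc'V rfl
    · exact hUV.ne_of_mem hx'U (h (hR (mem_diagonal x'))) rfl
  refine hclosed.isCompact.isPreconnected_of_subset_or_subset fun U V hU hV hUV hsub => ?_
  rcases hsub (subset_closure (hR (mem_diagonal x))) with hxU | hxV
  · exact Or.inl (subset_left_of_mem U V hU hV hUV hsub hxU)
  · exact Or.inr (subset_left_of_mem V U hV hU hUV.symm (union_comm U V ▸ hsub) hxV)

theorem hasBasis_nhdsSet_diagonal_isPreconnected [LocallyConnectedSpace X] :
    (𝓝ˢ (diagonal X)).HasBasis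
      (fun β => β ∈ 𝓝ˢ (diagonal X) ∧ ∀ z, IsPreconnected {y | (z, y) ∈ β}) id := by
  refine (𝓝ˢ (diagonal X)).basis_sets.restrict fun α hα => ?_
  have hU : ∀ z : X, ∃ U, (IsOpen U ∧ z ∈ U ∧ IsConnected U) ∧ U ×ˢ U ⊆ α := by
    intro z
    have hαz : α ∈ 𝓝 z ×ˢ 𝓝 z := nhds_prod_eq (x := z) (y := z) ▸
      mem_nhdsSet_iff_forall.1 hα (z, z) (mem_diagonal z)
    obtain ⟨s, hs, hsα⟩ := mem_prod_same_iff.1 hαz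
    obtain ⟨U, hU, hUs⟩ := (LocallyConnectedSpace.open_connected_basis z).mem_iff.1 hs
    exact ⟨U, hU, (prod_mono hUs hUs).trans hsα⟩
  choose U hU hUα using hU
  refine ⟨⋃ z, U z ×ˢ U z, ?_, ?_, iUnion_subset hUα⟩
  · refine (isOpen_iUnion fun z => (hU z).1.prod (hU z).1).mem_nhdsSet.2 ?_
    rintro ⟨z, w⟩ (rfl : z = w)
    exact mem_iUnion.2 ⟨z, (hU z).2.1, (hU z).2.1⟩
  · intro z
    refine isPreconnected_of_forall z fun y hy => ?_
    obtain ⟨w, hzw, hyw⟩ := mem_iUnion.1 hy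
    exact ⟨U w, fun u hu => mem_iUnion.2 ⟨w, hzw, hu⟩, hzw, hyw, (hU w).2.2.isPreconnected⟩

end Sections

section Flow

variable {T X : Type*} [Group T] [MulAction T X]

theorem diagonal_subset_smul_set {R : Set (X × X)} (hR : diagonal X ⊆ R) (t : T) :
    diagonal X ⊆ t • R := by
  rintro ⟨z, w⟩ (rfl : z = w)
  exact mem_smul_set_iff_inv_smul_mem.2 (hR (mem_diagonal (t⁻¹ • z)))

theorem diagonal_subset_iUnion_smul_set {R : Set (X × X)} (hR : diagonal X ⊆ R) :
    diagonal X ⊆ ⋃ t : T, t • R :=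
  (diagonal_subset_smul_set hR 1).trans (subset_iUnion (fun t : T => t • R) 1)

theorem section_smul_set (t : T) (R : Set (X × X)) (z : X) :
    {y | (z, y) ∈ t • R} = t • {y | (t⁻¹ • z, y) ∈ R} := by
  ext y
  simp [mem_smul_set_iff_inv_smul_mem]

variable [TopologicalSpace X]

theorem isPreconnected_section_iUnion_smul_set [ContinuousConstSMul T X] {R : Set (X × X)}
    (hR : diagonal X ⊆ R) (hconn : ∀ z, IsPreconnected {y | (z, y) ∈ R}) (z : X) :
    IsPreconnected {y | (z, y) ∈ ⋃ t : T, t • R} :=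
  isPreconnected_section_iUnion (diagonal_subset_smul_set hR) (fun t z => by
    rw [section_smul_set]
    exact (hconn _).image _ (continuous_const_smul t).continuousOn) z

theorem monotone_closure_iUnion_smul_set :
    Monotone fun R : Set (X × X) => closure (⋃ t : T, t • R) :=
  fun _ _ hRS => closure_mono (iUnion_mono fun _ => smul_set_mono hRS)

theorem regionallyProximal_eq_iInter {ι : Sort*} {p : ι → Prop} {s : ι → Set (X × X)}
    (h : (𝓝ˢ (diagonal X)).HasBasis p s) :
    regionallyProximal T = ⋂ i, ⋂ (_ : p i), closure (⋃ t : T, t • s i) :=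
  h.biInter_mem monotone_closure_iUnion_smul_set

end Flow

theorem stmt2_general {T X : Type*} [TopologicalSpace X] [CompactSpace X] [T2Space X]
    [LocallyConnectedSpace X] [TopologicalSpace T] [Group T]
    [MulAction T X] [ContinuousSMul T X] :
    ∀ x : X, IsConnected {y | (x, y) ∈ regionallyProximal T (X := X)} := by
  intro x
  have hB := hasBasis_nhdsSet_diagonal_isPreconnected (X := X)
  let B := {β : Set (X × X) // β ∈ 𝓝ˢ (diagonal X) ∧ ∀ z, IsPreconnected {y | (z, y) ∈ β}}
  let Q : B → Set X := fun β => {y | (x, y) ∈ closure (⋃ t : T, t • β.1)}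
  have hS : {y | (x, y) ∈ regionallyProximal T (X := X)} = ⋂ β, Q β := by
    ext y
    simp [regionallyProximal_eq_iInter hB, Q, B]
  have : Nonempty B := let ⟨β, hβ⟩ := hB.ex_mem; ⟨⟨β, hβ⟩⟩
  have hdir : Directed (· ⊇ ·) Q := fun β γ => by
    obtain ⟨δ, hδ, hδsub⟩ := hB.mem_iff.1 (inter_mem β.2.1 γ.2.1)
    exact ⟨⟨δ, hδ⟩,
      preimage_mono (monotone_closure_iUnion_smul_set (hδsub.trans inter_subset_left)),
      preimage_mono (monotone_closure_iUnion_smul_set (hδsub.trans inter_subset_right))⟩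
  have hrefl : ∀ β : B, diagonal X ⊆ ⋃ t : T, t • β.1 := fun β =>
    diagonal_subset_iUnion_smul_set (subset_of_mem_nhdsSet β.2.1)
  rw [hS]
  refine ⟨⟨x, mem_iInter.2 fun β => subset_closure (hrefl β (mem_diagonal x))⟩,
    isPreconnected_iInter_of_directed hdir (fun β => ?_) fun β => ?_⟩
  · exact (isClosed_closure.preimage (Continuous.prodMk_right x)).isCompact
  · exact isPreconnected_section_closure (hrefl β)
      (isPreconnected_section_iUnion_smul_set (subset_of_mem_nhdsSet β.2.1) β.2.2) x

/-- For a flow `(X,T)` on a compact, locally connected Hausdorff space,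
the regionally proximal relation `S_rp` is monotone: for every `x ∈ X` the set
`{y | (x,y) ∈ S_rp}` is connected. -/
theorem stmt2 {T X : Type*} [TopologicalSpace X] [CompactSpace X] [T2Space X]
    [LocallyConnectedSpace X] [TopologicalSpace T] [Group T] [IsTopologicalGroup T]
    [MulAction T X] [ContinuousSMul T X] :
    ∀ x : X, IsConnected {y | (x, y) ∈ regionallyProximal T (X := X)} :=
  stmt2_general
end

section
/- Let X be a locally connected compact Hausdorff space. Then every neighbourhood α of the diagonal in X × X contains a neighbourhood β of the diagonal such that β is monotone, i.e. for every x ∈ X the section [x]β = {y : (x,y) ∈ β} is connected. -/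
open Topology

/-- In a locally connected compact Hausdorff space `X`, every
neighbourhood `α` of the diagonal in `X × X` contains a neighbourhood `β` of the
diagonal which is monotone, i.e. all sections `{y | (x,y) ∈ β}` are connected. -/
theorem stmt6 {X : Type*} [TopologicalSpace X] [CompactSpace X] [T2Space X]
    [LocallyConnectedSpace X]
    (α : Set (X × X)) (hα : α ∈ 𝓝ˢ (Set.diagonal X)) :
    ∃ β ∈ 𝓝ˢ (Set.diagonal X), β ⊆ α ∧ ∀ x : X, IsConnected {y | (x, y) ∈ β} := by
  have key : ∀ x : X, ∃ V : Set X, IsOpen V ∧ x ∈ V ∧ IsConnected V ∧ V ×ˢ V ⊆ α := by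
    intro x
    have hx : α ∈ 𝓝 (x, x) :=
      mem_nhdsSet_iff_forall.mp hα (x, x) rfl
    rcases mem_nhds_prod_iff.mp hx with ⟨u, hu, v, hv, huv⟩
    rcases locallyConnectedSpace_iff_subsets_isOpen_isConnected.mp ‹_› x (u ∩ v)
        (Filter.inter_mem hu hv) with ⟨V, hVsub, hVopen, hxV, hVconn⟩
    exact ⟨V, hVopen, hxV, hVconn, fun p hp =>
      huv ⟨(hVsub hp.1).1, (hVsub hp.2).2⟩⟩
  choose V hVopen hxV hVconn hVα using key
  refine ⟨⋃ z, V z ×ˢ V z, ?_, ?_, ?_⟩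
  · rw [mem_nhdsSet_iff_forall]
    rintro ⟨x, y⟩ (rfl : x = y)
    exact ((isOpen_iUnion fun z => (hVopen z).prod (hVopen z)).mem_nhds
      (Set.mem_iUnion.2 ⟨x, hxV x, hxV x⟩))
  · exact Set.iUnion_subset fun z => hVα z
  · intro x
    have : {y | (x, y) ∈ ⋃ z, V z ×ˢ V z} = ⋃ z ∈ {z | x ∈ V z}, V z := by
      ext y
      simp only [Set.mem_setOf_eq, Set.mem_iUnion, Set.mem_prod]
      tauto
    rw [this]
    refine ⟨⟨x, Set.mem_biUnion (hxV x) (hxV x)⟩, ?_⟩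
    rw [← Set.sUnion_image]
    exact isPreconnected_sUnion x _ (by rintro s ⟨z, hz, rfl⟩; exact hz)
      (by rintro s ⟨z, hz, rfl⟩; exact (hVconn z).isPreconnected)
end

section
/- Let X be a compact Hausdorff space that is locally connected, and let R be a reflexive and monotone binary relation on X. Then the closure of R in X × X is also monotone. -/
open Set Topology Filter

/-- The directed intersection of nonempty compact connected sets in a T2 space is
connected. -/
lemma aux_directed_iInter_connected {X : Type*} [TopologicalSpace X] [T2Space X]
    {ι : Type*} [Nonempty ι] (K : ι → Set X) (hd : Directed (· ⊇ ·) K)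
    (hc : ∀ i, IsCompact (K i)) (hconn : ∀ i, IsConnected (K i)) :
    IsConnected (⋂ i, K i) := by
  have hcl : ∀ i, IsClosed (K i) := fun i => (hc i).isClosed
  have hne : (⋂ i, K i).Nonempty :=
    IsCompact.nonempty_iInter_of_directed_nonempty_isCompact_isClosed K hd
      (fun i => (hconn i).nonempty) hc hcl
  refine ⟨hne, ?_⟩
  have hKcl : IsClosed (⋂ i, K i) := isClosed_iInter hcl
  rw [isPreconnected_iff_subset_of_fully_disjoint_closed hKcl]
  intro Z1 Z2 hZ1 hZ2 hcover hdisj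
  set C := (⋂ i, K i) ∩ Z1 with hC
  set D := (⋂ i, K i) ∩ Z2 with hD
  by_contra hcon
  push_neg at hcon
  have hCne : C.Nonempty := by
    rcases not_subset.1 hcon.2 with ⟨z, hz, hz2⟩
    exact ⟨z, hz, (hcover hz).resolve_right hz2⟩
  have hDne : D.Nonempty := by
    rcases not_subset.1 hcon.1 with ⟨z, hz, hz1⟩
    exact ⟨z, hz, (hcover hz).resolve_left hz1⟩
  have hCcomp : IsCompact C := (hc (Classical.arbitrary ι)).of_isClosed_subset
    (hKcl.inter hZ1) (inter_subset_left.trans (iInter_subset _ _))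
  have hDcomp : IsCompact D := (hc (Classical.arbitrary ι)).of_isClosed_subset
    (hKcl.inter hZ2) (inter_subset_left.trans (iInter_subset _ _))
  obtain ⟨U, V, hU, hV, hCU, hDV, hUV⟩ :=
    SeparatedNhds.of_isCompact_isCompact hCcomp hDcomp
      (hdisj.mono inter_subset_right inter_subset_right)
  -- the sets K i \ (U ∪ V) form a directed family of compact closed sets with empty
  -- intersection, so one of them is empty
  have hempty : ¬ ∀ i, (K i \ (U ∪ V)).Nonempty := by
    intro hall
    have := IsCompact.nonempty_iInter_of_directed_nonempty_isCompact_isClosed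
      (fun i => K i \ (U ∪ V))
      (fun i j => by
        obtain ⟨k, hki, hkj⟩ := hd i j
        exact ⟨k, diff_subset_diff_left hki, diff_subset_diff_left hkj⟩)
      hall (fun i => (hc i).diff (hU.union hV))
      (fun i => (hcl i).sdiff (hU.union hV))
    obtain ⟨z, hz⟩ := this
    have hz' : z ∈ (⋂ i, K i) \ (U ∪ V) := by
      constructor
      · exact mem_iInter.2 fun i => (mem_iInter.1 hz i).1
      · exact (mem_iInter.1 hz (Classical.arbitrary ι)).2
    rcases hcover hz'.1 with h1 | h2
    · exact hz'.2 (Or.inl (hCU ⟨hz'.1, h1⟩))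
    · exact hz'.2 (Or.inr (hDV ⟨hz'.1, h2⟩))
  push_neg at hempty
  obtain ⟨i, hi⟩ := hempty
  rw [diff_eq_empty] at hi
  -- K i is connected, contained in U ∪ V, meets both U and V : contradiction
  obtain ⟨c, hc1, hc2⟩ := hCne
  obtain ⟨d, hd1, hd2⟩ := hDne
  have := (hconn i).isPreconnected U V hU hV hi
    ⟨c, mem_iInter.1 hc1 i, hCU ⟨hc1, hc2⟩⟩
    ⟨d, mem_iInter.1 hd1 i, hDV ⟨hd1, hd2⟩⟩
  obtain ⟨z, _, hzU, hzV⟩ := this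
  exact hUV.le_bot ⟨hzU, hzV⟩

/-- If `X` is a locally connected compact Hausdorff space and `R` is a
reflexive and monotone binary relation on `X`, then the closure of `R` in `X × X` is
also monotone, i.e. all sections `{y | (x,y) ∈ closure R}` are connected. -/
theorem stmt8 {X : Type*} [TopologicalSpace X] [CompactSpace X] [T2Space X]
    [LocallyConnectedSpace X] (R : Set (X × X))
    (hrefl : ∀ x : X, (x, x) ∈ R)
    (hmono : ∀ x : X, IsConnected {y | (x, y) ∈ R}) :
    ∀ x : X, IsConnected {y | (x, y) ∈ closure R} := by
  intro x
  have hbasis := LocallyConnectedSpace.open_connected_basis x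
  -- index type: connected open neighborhoods of x
  let ι := {U : Set X // IsOpen U ∧ x ∈ U ∧ IsConnected U}
  have hιne : Nonempty ι := by
    obtain ⟨U, hU, -⟩ := hbasis.mem_iff.1 (Filter.univ_mem : (univ : Set X) ∈ 𝓝 x)
    exact ⟨⟨U, hU⟩⟩
  -- F U : union of sections over points of U
  let F : Set X → Set X := fun U => {y | ∃ x' ∈ U, (x', y) ∈ R}
  have hFmono : ∀ {U V : Set X}, U ⊆ V → F U ⊆ F V := by
    rintro U V hUV y ⟨x', hx', hR⟩
    exact ⟨x', hUV hx', hR⟩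
  have hFsup : ∀ (U : Set X), U ⊆ F U := fun U u hu => ⟨u, hu, hrefl u⟩
  have hFconn : ∀ (U : ι), IsPreconnected (F U.1) := by
    rintro ⟨U, hUo, hxU, hUconn⟩
    apply isPreconnected_of_forall x
    rintro y ⟨x', hx', hR⟩
    refine ⟨U ∪ {z | (x', z) ∈ R}, ?_, Or.inl hxU, Or.inr hR, ?_⟩
    · rintro z (hz | hz)
      · exact hFsup U hz
      · exact ⟨x', hx', hz⟩
    · exact IsPreconnected.union x' hx' (hrefl x')
        hUconn.isPreconnected (hmono x').isPreconnected
  -- K U : closure of F U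
  let K : ι → Set X := fun U => closure (F U.1)
  have hKconn : ∀ U : ι, IsConnected (K U) :=
    fun U => ⟨⟨x, subset_closure (hFsup U.1 U.2.2.1)⟩, (hFconn U).closure⟩
  have hKcomp : ∀ U : ι, IsCompact (K U) := fun U => isClosed_closure.isCompact
  have hKdir : Directed (· ⊇ ·) K := by
    rintro U V
    obtain ⟨W, ⟨hWo, hxW, hWconn⟩, hWsub⟩ :=
      hbasis.mem_iff.1 (Filter.inter_mem (U.2.1.mem_nhds U.2.2.1) (V.2.1.mem_nhds V.2.2.1))
    refine ⟨⟨W, hWo, hxW, hWconn⟩, ?_, ?_⟩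
    · exact closure_mono (hFmono (hWsub.trans inter_subset_left))
    · exact closure_mono (hFmono (hWsub.trans inter_subset_right))
  -- the section equals the directed intersection
  have hEq : {y | (x, y) ∈ closure R} = ⋂ U : ι, K U := by
    ext y
    simp only [mem_setOf_eq, mem_iInter]
    constructor
    · intro hy U
      rw [mem_closure_iff_nhds]
      intro t ht
      have : (U.1 ×ˢ t) ∈ 𝓝 (x, y) := prod_mem_nhds (U.2.1.mem_nhds U.2.2.1) ht
      obtain ⟨⟨x', y'⟩, hmem, hR⟩ := (mem_closure_iff_nhds.1 hy) _ this
      exact ⟨y', hmem.2, x', hmem.1, hR⟩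
    · intro hy
      rw [mem_closure_iff_nhds]
      intro t ht
      obtain ⟨A, hA, B, hB, hAB⟩ := mem_nhds_prod_iff.1 ht
      obtain ⟨U, ⟨hUo, hxU, hUconn⟩, hUsub⟩ := hbasis.mem_iff.1 hA
      have hyK := hy ⟨U, hUo, hxU, hUconn⟩
      obtain ⟨y', hy'B, x', hx'U, hR⟩ := (mem_closure_iff_nhds.1 hyK) B hB
      exact ⟨(x', y'), hAB ⟨hUsub hx'U, hy'B⟩, hR⟩
  rw [hEq]
  exact aux_directed_iInter_connected K hKdir hKcomp hKconn
end

section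
/- Let X be a compact Hausdorff space and (R_α)_{α ∈ A} a decreasing net (indexed by a directed set A) of closed and reflexive binary relations on X such that for every α ∈ A there exists β ∈ A with β ≥ α and R_β monotone. Then the intersection ⋂_{α ∈ A} R_α is monotone. -/
/-- Let `X` be a compact Hausdorff space and `(R α)_{α ∈ A}` a decreasing
net (indexed by a directed set `A`) of closed reflexive binary relations on `X` such
that for every `α ∈ A` there is `β ≥ α` with `R β` monotone. Then `⋂ α, R α` is
monotone, i.e. all its sections are connected. -/
theorem stmt9 {X A : Type*} [TopologicalSpace X] [CompactSpace X] [T2Space X]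
    [Preorder A] [IsDirected A (· ≤ ·)] [Nonempty A]
    (R : A → Set (X × X))
    (hdec : ∀ a b : A, a ≤ b → R b ⊆ R a)
    (hcl : ∀ a : A, IsClosed (R a))
    (hrefl : ∀ (a : A) (x : X), (x, x) ∈ R a)
    (hmono : ∀ a : A, ∃ b : A, a ≤ b ∧ ∀ x : X, IsConnected {y | (x, y) ∈ R b}) :
    ∀ x : X, IsConnected {y | (x, y) ∈ ⋂ a : A, R a} := by
  intro x
  set S : A → Set X := fun a => {y | (x, y) ∈ R a} with hS
  have hSclosed : ∀ a, IsClosed (S a) :=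
    fun a => (hcl a).preimage (Continuous.prodMk_right x)
  have hSmono : ∀ a b : A, a ≤ b → S b ⊆ S a :=
    fun a b hab y hy => hdec a b hab hy
  have hSx : ∀ a, x ∈ S a := fun a => hrefl a x
  have hKeq : {y | (x, y) ∈ ⋂ a : A, R a} = ⋂ a, S a := by
    ext y; simp [hS, Set.mem_iInter]
  rw [hKeq]
  have hKsub : ∀ a, (⋂ b, S b) ⊆ S a := fun a => Set.iInter_subset _ a
  have hKclosed : IsClosed (⋂ a, S a) := isClosed_iInter hSclosed
  constructor
  · exact ⟨x, Set.mem_iInter.2 hSx⟩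
  rw [isPreconnected_iff_subset_of_fully_disjoint_closed hKclosed]
  intro u v hu hv hcov hdisj
  obtain ⟨U, V, hU, hV, huU, hvV, hUV⟩ := normal_separation hu hv hdisj
  -- find an index whose section is contained in `U ∪ V`
  obtain ⟨a, ha⟩ : ∃ a, S a ⊆ U ∪ V := by
    by_contra h
    push_neg at h
    have hdir : Directed (· ⊇ ·) (fun a => S a \ (U ∪ V)) := by
      intro a b
      obtain ⟨c, hac, hbc⟩ := directed_of (· ≤ ·) a b
      exact ⟨c, Set.diff_subset_diff_left (hSmono a c hac),
        Set.diff_subset_diff_left (hSmono b c hbc)⟩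
    obtain ⟨y, hy⟩ := IsCompact.nonempty_iInter_of_directed_nonempty_isCompact_isClosed
      (fun a => S a \ (U ∪ V)) hdir
      (fun a => Set.not_subset.1 (h a))
      (fun a => ((hSclosed a).isCompact).diff (hU.union hV))
      (fun a => (hSclosed a).sdiff (hU.union hV))
    have hyK : y ∈ ⋂ a, S a := Set.mem_iInter.2 fun a => ((Set.mem_iInter.1 hy) a).1
    have : y ∈ U ∪ V := by
      rcases hcov hyK with h' | h'
      · exact Or.inl (huU h')
      · exact Or.inr (hvV h')
    exact ((Set.mem_iInter.1 hy) (Classical.arbitrary A)).2 this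
  obtain ⟨b, hab, hbconn⟩ := hmono a
  have hSb : S b ⊆ U ∪ V := (hSmono a b hab).trans ha
  have : S b ⊆ U ∨ S b ⊆ V :=
    (hbconn x).isPreconnected.subset_or_subset hU hV hUV hSb
  rcases this with h' | h'
  · left
    intro y hy
    rcases hcov hy with h'' | h''
    · exact h''
    · exact absurd (h' (hKsub b hy)) (fun hyU => hUV.ne_of_mem hyU (hvV h'') rfl)
  · right
    intro y hy
    rcases hcov hy with h'' | h''
    · exact absurd (h' (hKsub b hy)) (fun hyV => hUV.ne_of_mem (huU h'') hyV rfl)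
    · exact h''
end

section
/- Let X be a compact Hausdorff space and S a closed equivalence relation on X. Define the monotone refinement relation S_mon of S by: (x,y) ∈ S_mon if and only if y lies in the connected component of x inside the S-equivalence class of x. Then S_mon is a closed equivalence relation on X (closed as a subset of X × X). -/
open Set

/-- Let `X` be a compact Hausdorff space and `S` a closed equivalence
relation on `X`. The monotone refinement relation `S_mon`, given by
`(x,y) ∈ S_mon ↔ y` lies in the connected component of `x` inside the `S`-class of `x`,
is again a closed equivalence relation on `X`. -/
theorem stmt11 {X : Type*} [TopologicalSpace X] [CompactSpace X] [T2Space X]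
    (S : Setoid X) (hcl : IsClosed {p : X × X | S.r p.1 p.2}) :
    Equivalence (fun x y : X => y ∈ connectedComponentIn {z | S.r x z} x) ∧
      IsClosed {p : X × X | p.2 ∈ connectedComponentIn {z | S.r p.1 z} p.1} := by
  have hclass : ∀ {x y : X}, S.r x y → {z | S.r x z} = {z | S.r y z} := by
    intro x y h
    ext z
    exact ⟨fun hz => S.trans' (S.symm' h) hz, fun hz => S.trans' h hz⟩
  constructor
  · refine ⟨fun x => mem_connectedComponentIn (S.refl' x), ?_, ?_⟩
    · intro x y h
      have hxy : S.r x y := connectedComponentIn_subset _ _ h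
      simp only [hclass hxy] at h ⊢
      rw [← connectedComponentIn_eq h]
      exact mem_connectedComponentIn (S.symm' hxy)
    · intro x y z hxy hyz
      have hxy' : S.r x y := connectedComponentIn_subset _ _ hxy
      simp only [← hclass hxy'] at hyz
      rwa [connectedComponentIn_eq hxy]
  · rw [← isOpen_compl_iff, isOpen_iff_forall_mem_open]
    rintro ⟨x, y⟩ hp
    simp only [mem_compl_iff, mem_setOf_eq] at hp
    by_cases hS : S.r x y
    · -- `y` is in the class of `x` but not in the connected component of `x` inside it.
      set C : Set X := {z | S.r x z} with hCdef
      have hCclosed : IsClosed C := by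
        have : C = (fun z : X => ((x, z) : X × X)) ⁻¹' {p : X × X | S.r p.1 p.2} := rfl
        rw [this]
        exact hcl.preimage (by continuity)
      have hCcompact : IsCompact C := hCclosed.isCompact
      haveI : CompactSpace C := isCompact_iff_compactSpace.mp hCcompact
      have hxC : x ∈ C := S.refl' x
      have hyC : y ∈ C := hS
      -- find a clopen set in `C` containing `x` but not `y`
      have hy' : (⟨y, hyC⟩ : C) ∉ connectedComponent (⟨x, hxC⟩ : C) := by
        intro hmem
        exact hp (by
          rw [connectedComponentIn_eq_image hxC]
          exact ⟨⟨y, hyC⟩, hmem, rfl⟩)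
      rw [connectedComponent_eq_iInter_isClopen, mem_iInter] at hy'
      push_neg at hy'
      obtain ⟨⟨U, hUclopen, hxU⟩, hyU⟩ := hy'
      -- separate the two compact pieces of `C` in `X`
      set K : Set X := (↑) '' U with hKdef
      set L : Set X := (↑) '' (Uᶜ : Set C) with hLdef
      have hKcomp : IsCompact K :=
        (hUclopen.isClosed.isCompact).image continuous_subtype_val
      have hLcomp : IsCompact L :=
        (hUclopen.compl.isClosed.isCompact).image continuous_subtype_val
      have hKL : Disjoint K L := by
        rw [disjoint_left]
        rintro a ⟨u, hu, rfl⟩ ⟨v, hv, hvu⟩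
        exact hv (by rw [Subtype.ext hvu]; exact hu)
      obtain ⟨V, W, hVopen, hWopen, hKV, hLW, hVW⟩ :=
        SeparatedNhds.of_isCompact_isCompact_isClosed hKcomp hLcomp hLcomp.isClosed hKL
      have hxV : x ∈ V := hKV ⟨⟨x, hxC⟩, hxU, rfl⟩
      have hyW : y ∈ W := by
        refine hLW ⟨⟨y, hyC⟩, ?_, rfl⟩
        intro hyU'
        exact hyU (by exact_mod_cast hyU')
      -- the set of points whose whole class lies in `V ∪ W` is open
      set O : Set X := {z | ∀ w, S.r z w → w ∈ V ∪ W} with hOdef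
      have hOopen : IsOpen O := by
        rw [← isClosed_compl_iff]
        have : Oᶜ = Prod.fst '' ({p : X × X | S.r p.1 p.2} ∩ (univ ×ˢ (V ∪ W)ᶜ)) := by
          ext z
          simp only [mem_compl_iff, hOdef, mem_setOf_eq, not_forall, mem_image, mem_inter_iff,
            mem_prod, mem_univ, true_and]
          constructor
          · rintro ⟨w, hw, hwVW⟩
            exact ⟨(z, w), ⟨hw, hwVW⟩, rfl⟩
          · rintro ⟨⟨a, b⟩, ⟨hab, hb⟩, rfl⟩
            exact ⟨b, hab, hb⟩
        rw [this]
        have hclosed : IsClosed ({p : X × X | S.r p.1 p.2} ∩ (univ ×ˢ (V ∪ W)ᶜ)) :=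
          hcl.inter ((isClosed_univ.prod (hVopen.union hWopen).isClosed_compl))
        exact (hclosed.isCompact.image continuous_fst).isClosed
      have hxO : x ∈ O := by
        intro w hw
        have hwC : w ∈ C := hw
        by_cases hwU : (⟨w, hwC⟩ : C) ∈ U
        · exact Or.inl (hKV ⟨⟨w, hwC⟩, hwU, rfl⟩)
        · exact Or.inr (hLW ⟨⟨w, hwC⟩, hwU, rfl⟩)
      refine ⟨(O ∩ V) ×ˢ W, ?_, ((hOopen.inter hVopen).prod hWopen), ⟨⟨hxO, hxV⟩, hyW⟩⟩
      rintro ⟨a, b⟩ ⟨⟨haO, haV⟩, hbW⟩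
      simp only [mem_compl_iff, mem_setOf_eq]
      intro hb
      have hsub : connectedComponentIn {z | S.r a z} a ⊆ V := by
        apply IsPreconnected.subset_left_of_subset_union hVopen hWopen hVW
        · intro w hw
          exact haO w (connectedComponentIn_subset _ _ hw)
        · exact ⟨a, mem_connectedComponentIn (S.refl' a), haV⟩
        · exact isPreconnected_connectedComponentIn
      exact (disjoint_left.mp hVW) (hsub hb) hbW
    · -- `y` is not even related to `x`
      refine ⟨{p : X × X | S.r p.1 p.2}ᶜ, ?_, hcl.isOpen_compl, hS⟩
      intro p hps
      simp only [mem_compl_iff, mem_setOf_eq] at hps ⊢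
      intro hmem
      exact hps (connectedComponentIn_subset _ _ hmem)
end

section
/- Let U ⊆ T² be a topological disc (an open set homeomorphic to the open unit disc in ℝ²) and let f : T² → T² be a homeomorphism such that f(closure(U)) ⊆ U. Then f has a fixed point. -/
/-!
If a continuous map `g` took a closed disc `D` into its interior without fixed points, the
nonvanishing map `z ↦ z - g z` would have a continuous logarithm on the simply connected `D`.
On the boundary circle `z - g z = z * (1 - g z / z)` with `‖g z / z‖ < 1`, so the principal
logarithm of the second factor is continuous there, and the two together give a continuous
logarithm of `z` along the circle, which cannot exist. In the torus, `f` restricts to a self-map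
of the disc `U` with image in the compact set `f (closure U)`, that is, in a closed subdisc.
-/

/-- The two-torus `𝕋² = ℝ²/ℤ²`. -/
abbrev Torus2 : Type := UnitAddCircle × UnitAddCircle

open Complex Metric Set Real

theorem Complex.exists_continuous_exp_comp_eq {X : Type*} [TopologicalSpace X]
    [SimplyConnectedSpace X] [LocallyPathConnectedSpace X] {h : X → ℂ} (hh : Continuous h)
    (h0 : ∀ x, h x ≠ 0) : ∃ L : X → ℂ, Continuous L ∧ ∀ x, exp (L x) = h x := by
  obtain ⟨x₀⟩ := (inferInstance : Nonempty X)
  obtain ⟨L, ⟨-, hL⟩, -⟩ := isCoveringMapOn_exp.existsUnique_continuousMap_lifts ⟨h, hh⟩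
    (exp_log (h0 x₀)) h0
  exact ⟨L, L.continuous, congrFun hL⟩

theorem Complex.add_two_pi_mul_I_of_exp_eq {M : ℝ → ℂ} (hM : Continuous M) {c : ℂ}
    (hexp : ∀ t, exp (M t) = c * exp (t * I)) (t : ℝ) :
    M (t + 2 * π) = M t + 2 * π * I := by
  have hconst := isCoveringMap_exp.const_of_comp (g := fun t : ℝ => M t - t * I)
    (by fun_prop) (fun a a' => by simp [exp_sub, hexp]) (t + 2 * π) t
  push_cast at hconst
  linear_combination hconst

theorem Complex.exists_fixedPoint_of_closedBall_to_ball {r : ℝ} (hr : 0 < r)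
    {g : closedBall (0 : ℂ) r → ℂ} (hg : Continuous g) (hgr : ∀ z, g z ∈ ball 0 r) :
    ∃ z, g z = z := by
  by_contra! hfix
  have := contractibleSpace_closedBall (x := (0 : ℂ)) hr.le
  have := (convex_closedBall (0 : ℂ) r).locallyPathConnectedSpace
  obtain ⟨L, hLc, hL⟩ := exists_continuous_exp_comp_eq
    (h := fun z : closedBall (0 : ℂ) r => (z : ℂ) - g z) (by fun_prop)
    fun z => sub_ne_zero.2 (hfix z).symm
  let γ : ℝ → closedBall (0 : ℂ) r := fun t =>
    ⟨r * exp (t * I), by simp [norm_exp_ofReal_mul_I, abs_of_pos hr]⟩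
  have hγc : Continuous γ := by fun_prop
  have hγ0 : ∀ t, (γ t : ℂ) ≠ 0 := fun t =>
    mul_ne_zero (by exact_mod_cast hr.ne') (exp_ne_zero _)
  have hγper : Function.Periodic γ (2 * π) := fun t => Subtype.ext <| by
    simp only [γ]; push_cast; exact congrArg _ (exp_mul_I_periodic (t : ℂ))
  -- `z - g z = z * q` on the circle with `Re q > 0`, so `L - log q` is a logarithm of `z` there
  let q : ℝ → ℂ := fun t => 1 - g (γ t) / γ t
  have hq : ∀ t, q t ∈ slitPlane := by
    intro t
    have hnorm : ‖(γ t : ℂ)‖ = r := by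
      simp [γ, norm_exp_ofReal_mul_I, abs_of_pos hr]
    have hlt : ‖g (γ t) / γ t‖ < 1 := by
      rw [norm_div, hnorm, div_lt_one hr]
      simpa using hgr (γ t)
    refine mem_slitPlane_iff.2 (Or.inl ?_)
    simp only [q, sub_re, one_re, sub_pos]
    exact (re_le_norm _).trans_lt hlt
  let M : ℝ → ℂ := fun t => L (γ t) - log (q t)
  have hMc : Continuous M :=
    (hLc.comp hγc).sub (Continuous.clog (by fun_prop (disch := exact hγ0)) hq)
  have hexp : ∀ t, exp (M t) = r * exp (t * I) := by
    intro t
    have hfac : (γ t : ℂ) - g (γ t) = γ t * q t := by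
      have := hγ0 t
      simp only [q]
      field_simp
    have hq0 := slitPlane_ne_zero (hq t)
    rw [exp_sub, hL, exp_log hq0, hfac, mul_div_cancel_right₀ _ hq0]
  have hMper : Function.Periodic M (2 * π) := fun t => by simp only [M, q, hγper t]
  have hturn := add_two_pi_mul_I_of_exp_eq hMc hexp 0
  rw [hMper 0] at hturn
  exact two_pi_I_ne_zero (left_eq_add.1 hturn)

theorem exists_fixedPoint_of_homeomorph_ball {Y : Type*} [TopologicalSpace Y]
    (φ : Y ≃ₜ ball (0 : ℂ) 1) {g : Y → Y} (hg : Continuous g) {K : Set Y} (hK : IsCompact K)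
    (hgK : range g ⊆ K) : ∃ y, g y = y := by
  have hK' : IsCompact ((fun y => (φ y : ℂ)) '' K) := hK.image (by fun_prop)
  obtain ⟨r, ⟨hr0, hr1⟩, hKr⟩ := exists_pos_lt_subset_ball one_pos hK'.isClosed
    (by rintro - ⟨y, -, rfl⟩; exact (φ y).2)
  let ι : closedBall (0 : ℂ) r → ball (0 : ℂ) 1 := fun z =>
    ⟨z, closedBall_subset_ball hr1 z.2⟩
  obtain ⟨z, hz⟩ := Complex.exists_fixedPoint_of_closedBall_to_ball hr0
    (g := fun z => φ (g (φ.symm (ι z)))) (by fun_prop)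
    (fun z => hKr ⟨_, hgK ⟨_, rfl⟩, rfl⟩)
  refine ⟨φ.symm (ι z), φ.injective (Subtype.ext ?_)⟩
  simpa using hz

theorem stmt14_general (U : Set Torus2)
    (hdisc : Nonempty (U ≃ₜ Metric.ball (0 : EuclideanSpace ℝ (Fin 2)) 1))
    (f : Torus2 ≃ₜ Torus2) (hf : f '' closure U ⊆ U) :
    ∃ x : Torus2, f x = x := by
  obtain ⟨φ⟩ := hdisc
  let ψ : ball (0 : EuclideanSpace ℝ (Fin 2)) 1 ≃ₜ ball (0 : ℂ) 1 :=
    orthonormalBasisOneI.repr.symm.toHomeomorph.subtype fun x => by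
      simp only [mem_ball_zero_iff, LinearIsometryEquiv.coe_toHomeomorph,
        LinearIsometryEquiv.norm_map]
  have hfU : ∀ u : U, f u ∈ U := fun u => hf ⟨u, subset_closure u.2, rfl⟩
  have hK : IsCompact (((↑) : U → Torus2) ⁻¹' (f '' closure U)) := by
    rw [Subtype.isCompact_iff, Subtype.image_preimage_coe, inter_eq_right.2 hf]
    exact isClosed_closure.isCompact.image f.continuous
  obtain ⟨u, hu⟩ := exists_fixedPoint_of_homeomorph_ball (φ.trans ψ)
    (g := fun u => ⟨f u, hfU u⟩) (by fun_prop) hK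
    (by rintro - ⟨u, rfl⟩; exact ⟨u, subset_closure u.2, rfl⟩)
  exact ⟨u, congrArg Subtype.val hu⟩

/-- Let `U ⊆ 𝕋²` be a topological disc (an open set homeomorphic to the
open unit disc `{x ∈ ℝ² : |x| < 1}`) and `f : 𝕋² → 𝕋²` a homeomorphism with
`f(closure U) ⊆ U`. Then `f` has a fixed point. -/
theorem stmt14 (U : Set Torus2) (hUopen : IsOpen U)
    (hdisc : Nonempty (U ≃ₜ Metric.ball (0 : EuclideanSpace ℝ (Fin 2)) 1))
    (f : Torus2 ≃ₜ Torus2) (hf : f '' closure U ⊆ U) :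
    ∃ x : Torus2, f x = x :=
  stmt14_general U hdisc f hf
end

section
/- Let S be a monotone upper semicontinuous equivalence relation on the two-torus T² = ℝ²/ℤ². Then the set B = {M ∈ T²/S : M is bounded} is an open subset of the quotient space T²/S. -/
/-- The canonical projection `p : ℝ² → 𝕋²`. -/
noncomputable def torusProj : ℝ × ℝ → Torus2 :=
  fun v => ((v.1 : UnitAddCircle), (v.2 : UnitAddCircle))

/-- A subset `M ⊆ 𝕋²` is bounded if every connected component of `p⁻¹(M)` is a bounded
subset of `ℝ²`. -/
def BoundedInTorus2 (M : Set Torus2) : Prop :=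
  ∀ z ∈ torusProj ⁻¹' M, Bornology.IsBounded (connectedComponentIn (torusProj ⁻¹' M) z)


open Metric Set Bornology

namespace Stmt15Aux

/-- inclusion of the integer lattice -/
def lat (n : ℤ × ℤ) : ℝ × ℝ := ((n.1 : ℝ), (n.2 : ℝ))

lemma lat_add (m n : ℤ × ℤ) : lat (m + n) = lat m + lat n := by
  simp [lat, Prod.ext_iff]

lemma lat_zero : lat 0 = 0 := by simp [lat]

lemma lat_sub_add (m n : ℤ × ℤ) : lat (m - n) + lat n = lat m := by
  rw [← lat_add]; simp

lemma lat_norm_ge {n : ℤ × ℤ} (hn : n ≠ 0) : (1:ℝ) ≤ ‖lat n‖ := by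
  have : n.1 ≠ 0 ∨ n.2 ≠ 0 := by
    by_contra h; push_neg at h; exact hn (Prod.ext h.1 h.2)
  rw [Prod.norm_def]
  have h1 : ‖(lat n).1‖ = |(n.1 : ℝ)| := by simp [lat, Real.norm_eq_abs]
  have h2 : ‖(lat n).2‖ = |(n.2 : ℝ)| := by simp [lat, Real.norm_eq_abs]
  rcases this with h | h
  · refine le_max_of_le_left ?_
    rw [h1, ← Int.cast_abs]; exact_mod_cast Int.one_le_abs h
  · refine le_max_of_le_right ?_
    rw [h2, ← Int.cast_abs]; exact_mod_cast Int.one_le_abs h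

lemma lat_norm_eq (n : ℤ × ℤ) : ‖lat n‖ = max |(n.1 : ℝ)| |(n.2 : ℝ)| := by
  rw [Prod.norm_def]
  rfl

lemma coe_eq_iff (x y : ℝ) : (x : UnitAddCircle) = y ↔ ∃ n : ℤ, x = y + n := by
  rw [show ((x:UnitAddCircle)=(y:UnitAddCircle)) ↔ _ from QuotientAddGroup.eq]
  constructor
  · rintro ⟨n, hn⟩
    simp only [zsmul_eq_mul, mul_one] at hn
    exact ⟨-n, by push_cast; linarith⟩
  · rintro ⟨n, rfl⟩
    exact ⟨-n, by simp only [zsmul_eq_mul, mul_one]; push_cast; ring⟩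

lemma proj_eq_iff (u v : ℝ × ℝ) : torusProj u = torusProj v ↔ ∃ n : ℤ × ℤ, u = v + lat n := by
  unfold torusProj
  rw [Prod.ext_iff]
  simp only [coe_eq_iff]
  constructor
  · rintro ⟨⟨n1, h1⟩, ⟨n2, h2⟩⟩
    exact ⟨(n1, n2), Prod.ext h1 h2⟩
  · rintro ⟨n, rfl⟩
    exact ⟨⟨n.1, rfl⟩, ⟨n.2, rfl⟩⟩

lemma proj_add (v : ℝ × ℝ) (n : ℤ × ℤ) : torusProj (v + lat n) = torusProj v :=
  (proj_eq_iff _ _).2 ⟨n, rfl⟩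

lemma continuous_proj : Continuous torusProj :=
  ((AddCircle.continuous_mk' 1).comp continuous_fst).prodMk
    ((AddCircle.continuous_mk' 1).comp continuous_snd)

lemma surjective_proj : Function.Surjective torusProj := by
  rintro ⟨a, b⟩
  obtain ⟨x, rfl⟩ := QuotientAddGroup.mk_surjective a
  obtain ⟨y, rfl⟩ := QuotientAddGroup.mk_surjective b
  exact ⟨(x, y), rfl⟩

lemma isOpenMap_proj : IsOpenMap torusProj := by
  have : torusProj = Prod.map ((↑) : ℝ → UnitAddCircle) ((↑) : ℝ → UnitAddCircle) := rfl
  rw [this]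
  exact IsOpenMap.prodMap QuotientAddGroup.isOpenMap_coe QuotientAddGroup.isOpenMap_coe

lemma quotientMap_proj : Topology.IsQuotientMap torusProj :=
  isOpenMap_proj.isQuotientMap continuous_proj surjective_proj

/-- Šura-Bura type extraction of a clopen neighborhood of a connected component
inside any open neighborhood, in a compact Hausdorff space. -/
lemma exists_isClopen_subset {X : Type*} [TopologicalSpace X] [T2Space X] [CompactSpace X]
    (x : X) {U : Set X} (hU : IsOpen U) (h : connectedComponent x ⊆ U) :
    ∃ Z : Set X, IsClopen Z ∧ x ∈ Z ∧ Z ⊆ U := by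
  classical
  have hcov : Uᶜ ⊆ ⋃ i : {s : Set X // IsClopen s ∧ x ∈ s}, (↑i : Set X)ᶜ := by
    intro y hy
    have hy' : y ∉ connectedComponent x := fun hc => hy (h hc)
    rw [connectedComponent_eq_iInter_isClopen x] at hy'
    simp only [Set.mem_iInter, not_forall] at hy'
    obtain ⟨i, hi⟩ := hy'
    exact Set.mem_iUnion.2 ⟨i, hi⟩
  obtain ⟨t, ht⟩ := (hU.isClosed_compl.isCompact).elim_finite_subcover
    (fun i : {s : Set X // IsClopen s ∧ x ∈ s} => (↑i : Set X)ᶜ)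
    (fun i => i.2.1.compl.isOpen) hcov
  refine ⟨⋂ i ∈ t, (↑i : Set X), t.finite_toSet.isClopen_biInter (fun i _ => i.2.1), ?_, ?_⟩
  · exact Set.mem_biInter fun i _ => i.2.2
  · intro y hy
    by_contra hyU
    obtain ⟨i, hit, hi⟩ := Set.mem_iUnion₂.1 (ht hyU)
    exact hi (Set.mem_iInter₂.1 hy i hit)

lemma finset_min_pos {ι : Type*} (s : Finset ι) (f : ι → ℝ) (hf : ∀ i ∈ s, 0 < f i) :
    ∃ δ : ℝ, 0 < δ ∧ δ ≤ 1 ∧ ∀ i ∈ s, δ ≤ f i := by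
  classical
  induction s using Finset.induction with
  | empty => exact ⟨1, one_pos, le_refl 1, by simp⟩
  | @insert a s ha ih =>
    obtain ⟨δ, hδ, hδ1, hδf⟩ := ih (fun i hi => hf i (Finset.mem_insert_of_mem hi))
    have hfa := hf a (Finset.mem_insert_self a s)
    refine ⟨min δ (f a), lt_min hδ hfa, (min_le_left _ _).trans hδ1, ?_⟩
    intro i hi
    rcases Finset.mem_insert.1 hi with rfl | hi
    · exact min_le_right _ _
    · exact (min_le_left _ _).trans (hδf i hi)

lemma sep_of_compact_closed {s t : Set (ℝ × ℝ)} (hs : IsCompact s) (ht : IsClosed t)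
    (hd : Disjoint s t) : ∃ δ : ℝ, 0 < δ ∧ ∀ a ∈ s, ∀ b ∈ t, δ ≤ dist a b := by
  obtain ⟨δ, hδ, hdis⟩ := hd.exists_thickenings hs ht
  refine ⟨δ, hδ, fun a ha b hb => ?_⟩
  by_contra hlt
  push_neg at hlt
  exact Set.disjoint_left.1 hdis
    (Metric.mem_thickening_iff.2 ⟨a, ha, by rwa [dist_comm]⟩)
    (Metric.self_subset_thickening hδ t hb)

lemma bad_finite (M : ℝ) : {n : ℤ × ℤ | (|n.1| : ℝ) ≤ M ∧ (|n.2| : ℝ) ≤ M}.Finite := by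
  apply Set.Finite.subset (Set.finite_Icc (α := ℤ × ℤ) (-(⌈M⌉, ⌈M⌉)) (⌈M⌉, ⌈M⌉))
  rintro ⟨n1, n2⟩ ⟨h1, h2⟩
  have e1 : |n1| ≤ ⌈M⌉ := by
    rw [← @Int.cast_le ℝ]; push_cast; exact h1.trans (Int.le_ceil M)
  have e2 : |n2| ≤ ⌈M⌉ := by
    rw [← @Int.cast_le ℝ]; push_cast; exact h2.trans (Int.le_ceil M)
  rw [abs_le] at e1 e2
  exact ⟨⟨e1.1, e2.1⟩, ⟨e1.2, e2.2⟩⟩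

end Stmt15Aux


/-- Let `S` be a monotone (classes connected) and upper semicontinuous
(classes compact, quotient map closed) equivalence relation on the two-torus. Then the
set `B` of all bounded equivalence classes is open in the quotient space `𝕋²/S`
(a point `q` of the quotient corresponds to the class `(Quotient.mk S)⁻¹ {q}`). -/
theorem stmt15 (S : Setoid Torus2)
    (hmono : ∀ x : Torus2, IsConnected {y | S.r x y})
    (husc : (∀ x : Torus2, IsCompact {y | S.r x y}) ∧ IsClosedMap (Quotient.mk S)) :
    IsOpen {q : Quotient S | BoundedInTorus2 (Quotient.mk S ⁻¹' {q})} := by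
  classical
  open Stmt15Aux Metric Set Bornology in
  rw [isOpen_iff_forall_mem_open]
  intro q hq
  simp only [Set.mem_setOf_eq] at hq
  obtain ⟨x, hx⟩ := Quotient.exists_rep q
  set C : Set Torus2 := Quotient.mk S ⁻¹' {q} with hCdef
  have hCeq : C = {y | S.r x y} := by
    ext y
    simp only [hCdef, Set.mem_preimage, Set.mem_singleton_iff, ← hx, Set.mem_setOf_eq]
    constructor
    · intro h; exact S.symm (Quotient.eq.1 h)
    · intro h; exact Quotient.sound (S.symm h)
  have hCconn : IsConnected C := hCeq ▸ hmono x
  have hCcomp : IsCompact C := hCeq ▸ husc.1 x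
  set F : Set (ℝ × ℝ) := torusProj ⁻¹' C with hFdef
  have hFclosed : IsClosed F := hCcomp.isClosed.preimage continuous_proj
  have hFinv : ∀ (n : ℤ × ℤ) (w : ℝ × ℝ), w ∈ F → w + lat n ∈ F := by
    intro n w hw
    show torusProj (w + lat n) ∈ C
    rw [proj_add]
    exact hw
  obtain ⟨z, hzx⟩ := surjective_proj x
  have hxC : x ∈ C := by simp [hCdef, hx]
  have hzF : z ∈ F := by
    show torusProj z ∈ C
    rw [hzx]; exact hxC
  set K := connectedComponentIn F z with hKdef
  have hKF : K ⊆ F := connectedComponentIn_subset F z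
  have hzK : z ∈ K := mem_connectedComponentIn hzF
  have hKconn : IsPreconnected K := isPreconnected_connectedComponentIn
  have hKb : Bornology.IsBounded K := hq z hzF
  have hKclosed : IsClosed K := by
    rw [hKdef, connectedComponentIn_eq_image hzF]
    exact hFclosed.isClosedMap_subtype_val _ isClosed_connectedComponent
  have hKcomp : IsCompact K := Metric.isCompact_of_isClosed_isBounded hKclosed hKb
  obtain ⟨r0, hr0⟩ := hKb.subset_closedBall z
  set r : ℝ := max r0 0 with hrdef
  have hr : 0 ≤ r := le_max_right _ _
  have hKr : K ⊆ Metric.closedBall z r :=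
    hr0.trans (Metric.closedBall_subset_closedBall (le_max_left _ _))
  -- translates
  set tr : ℤ × ℤ → Set (ℝ × ℝ) → Set (ℝ × ℝ) := fun n s => (fun w => w + lat n) '' s with htrdef
  have htr_pre : ∀ (n : ℤ × ℤ) (s : Set (ℝ × ℝ)), tr n s = (fun w => w - lat n) ⁻¹' s := by
    intro n s
    ext w
    constructor
    · rintro ⟨a, ha, rfl⟩; simpa using ha
    · intro hw; exact ⟨w - lat n, hw, sub_add_cancel w (lat n)⟩
  have htr_open : ∀ (n : ℤ × ℤ) (s : Set (ℝ × ℝ)), IsOpen s → IsOpen (tr n s) := by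
    intro n s hs
    rw [htr_pre]
    exact hs.preimage (continuous_id.sub continuous_const)
  have htr_closed : ∀ (n : ℤ × ℤ) (s : Set (ℝ × ℝ)), IsClosed s → IsClosed (tr n s) := by
    intro n s hs
    rw [htr_pre]
    exact hs.preimage (continuous_id.sub continuous_const)
  -- disjointness of K from its nontrivial translates
  have hKdisj : ∀ n : ℤ × ℤ, n ≠ 0 → Disjoint K (tr n K) := by
    intro n hn
    rw [Set.disjoint_right]
    rintro y ⟨k, hkK, rfl⟩ hyK
    have htrK : tr n K ⊆ K := by
      have h1 : IsPreconnected (tr n K) :=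
        hKconn.image _ ((continuous_id.add continuous_const).continuousOn)
      have h2 : tr n K ⊆ F := by
        rintro _ ⟨w, hw, rfl⟩; exact hFinv n w (hKF hw)
      have h3 := h1.subset_connectedComponentIn (⟨k, hkK, rfl⟩ : k + lat n ∈ tr n K) h2
      rwa [← connectedComponentIn_eq hyK] at h3
    have hiter : ∀ m : ℕ, z + m • lat n ∈ K := by
      intro m
      induction m with
      | zero => simpa using hzK
      | succ m ih =>
        have hmem := htrK ⟨_, ih, rfl⟩
        have he : (m + 1) • lat n = m • lat n + lat n := succ_nsmul _ _
        rw [he, ← add_assoc]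
        exact hmem
    have hmem := hKr (hiter (⌈r⌉₊ + 1))
    rw [Metric.mem_closedBall] at hmem
    have hd : dist (z + (⌈r⌉₊ + 1) • lat n) z = ((⌈r⌉₊ : ℝ) + 1) * ‖lat n‖ := by
      rw [dist_eq_norm]
      have hcan : z + (⌈r⌉₊ + 1) • lat n - z = (⌈r⌉₊ + 1) • lat n := add_sub_cancel_left z _
      rw [hcan, ← Nat.cast_smul_eq_nsmul ℝ, norm_smul, Real.norm_eq_abs,
        abs_of_nonneg (by positivity)]
      push_cast
      ring
    have h1 : (1 : ℝ) ≤ ‖lat n‖ := lat_norm_ge hn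
    have h2 : r ≤ (⌈r⌉₊ : ℝ) := Nat.le_ceil r
    nlinarith [norm_nonneg (lat n)]
  -- a uniform gap δ
  set Bd : Set (ℤ × ℤ) := {n | n ≠ 0 ∧ (|n.1| : ℝ) ≤ 2 * r + 1 ∧ (|n.2| : ℝ) ≤ 2 * r + 1}
    with hBddef
  have hBdfin : Bd.Finite := (bad_finite (2 * r + 1)).subset (fun n hn => hn.2)
  have hsepn : ∀ n ∈ hBdfin.toFinset,
      ∃ d : ℝ, 0 < d ∧ ∀ a ∈ K, ∀ b ∈ tr n K, d ≤ dist a b := by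
    intro n hn
    rw [Set.Finite.mem_toFinset] at hn
    exact sep_of_compact_closed hKcomp (htr_closed n K hKclosed) (hKdisj n hn.1)
  choose! dfun hdpos hdle using hsepn
  obtain ⟨δ, hδpos, hδ1, hδmin⟩ := finset_min_pos hBdfin.toFinset dfun hdpos
  have hP : ∀ n : ℤ × ℤ, n ≠ 0 → ∀ a ∈ K, ∀ b ∈ K, δ ≤ dist a (b + lat n) := by
    intro n hn a ha b hb
    by_cases hnB : n ∈ Bd
    · exact (hδmin n (hBdfin.mem_toFinset.2 hnB)).trans
        (hdle n (hBdfin.mem_toFinset.2 hnB) a ha _ ⟨b, hb, rfl⟩)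
    · have hlarge : 2 * r + 1 < ‖lat n‖ := by
        simp only [hBddef, Set.mem_setOf_eq, not_and_or, not_le] at hnB
        rcases hnB with h | h | h
        · exact absurd hn (by simpa using h)
        · exact lt_of_lt_of_le h (by rw [lat_norm_eq]; exact le_max_left _ _)
        · exact lt_of_lt_of_le h (by rw [lat_norm_eq]; exact le_max_right _ _)
      have h1 : dist z (z + lat n) = ‖lat n‖ := by rw [dist_eq_norm]; simp
      have h2 : dist (b + lat n) (z + lat n) = dist b z := dist_add_right b z (lat n)
      have h3 : dist z a ≤ r := by rw [dist_comm]; exact hKr ha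
      have h4 : dist b z ≤ r := hKr hb
      have h5 : dist z (z + lat n) ≤ dist z a + (dist a (b + lat n) + dist (b + lat n) (z + lat n)) :=
        (dist_triangle z a (z + lat n)).trans
          (by gcongr; exact dist_triangle a (b + lat n) (z + lat n))
      rw [h1, h2] at h5
      linarith
  set ε : ℝ := δ / 4 with hεdef
  have hεpos : 0 < ε := by positivity
  set R : ℝ := r + ε + 1 with hRdef
  have hthick_sub : Metric.thickening ε K ⊆ Metric.ball z R := by
    intro w hw
    obtain ⟨k, hk, hdk⟩ := Metric.mem_thickening_iff.1 hw
    have hkz : dist k z ≤ r := hKr hk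
    have htri : dist w z ≤ dist w k + dist k z := dist_triangle _ _ _
    rw [Metric.mem_ball]
    simp only [hRdef]
    linarith
  set G : Set (ℝ × ℝ) := F ∩ Metric.closedBall z (R + 1) with hGdef
  have hGcomp : IsCompact G := (isCompact_closedBall z (R + 1)).inter_left hFclosed
  haveI : CompactSpace G := isCompact_iff_compactSpace.1 hGcomp
  have hzG : z ∈ G := ⟨hzF, by
    rw [Metric.mem_closedBall, dist_self]
    simp only [hRdef]
    linarith⟩
  have hKG : K ⊆ G := fun w hw =>
    ⟨hKF hw, Metric.closedBall_subset_closedBall (by simp only [hRdef]; linarith) (hKr hw)⟩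
  have hKG' : connectedComponentIn G z = K := by
    apply Set.Subset.antisymm
    · exact connectedComponentIn_mono z Set.inter_subset_left
    · exact hKconn.subset_connectedComponentIn hzK hKG
  have himg : Subtype.val '' connectedComponent (⟨z, hzG⟩ : G) = K := by
    rw [← connectedComponentIn_eq_image hzG]
    exact hKG'
  have hVopen : IsOpen (Subtype.val ⁻¹' (Metric.thickening ε K ∩ Metric.ball z R) : Set G) :=
    (Metric.isOpen_thickening.inter Metric.isOpen_ball).preimage continuous_subtype_val
  have hcompV : connectedComponent (⟨z, hzG⟩ : G) ⊆
      Subtype.val ⁻¹' (Metric.thickening ε K ∩ Metric.ball z R) := by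
    intro w hw
    have hwK : (w : ℝ × ℝ) ∈ K := himg ▸ ⟨w, hw, rfl⟩
    have hwt : (w : ℝ × ℝ) ∈ Metric.thickening ε K := Metric.self_subset_thickening hεpos K hwK
    exact ⟨hwt, hthick_sub hwt⟩
  obtain ⟨Z, hZclopen, hzZ, hZsub⟩ := exists_isClopen_subset _ hVopen hcompV
  set A : Set (ℝ × ℝ) := Subtype.val '' Z with hAdef
  have hAcomp : IsCompact A := (hZclopen.isClosed.isCompact).image continuous_subtype_val
  have hAK : A ⊆ Metric.thickening ε K ∩ Metric.ball z R := by
    rintro _ ⟨w, hw, rfl⟩; exact hZsub hw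
  have hzA : z ∈ A := ⟨⟨z, hzG⟩, hzZ, rfl⟩
  have hAF : A ⊆ F := by rintro _ ⟨w, hw, rfl⟩; exact w.2.1
  obtain ⟨O, hOopen, hOeq⟩ := isOpen_induced_iff.1 hZclopen.isOpen
  have hAeq : A = F ∩ (O ∩ Metric.ball z R) := by
    ext w
    constructor
    · rintro ⟨u, hu, rfl⟩
      refine ⟨u.2.1, ?_, (hZsub hu).2⟩
      have : u ∈ Subtype.val ⁻¹' O := by rw [hOeq]; exact hu
      exact this
    · rintro ⟨hwF, hwO, hwb⟩
      have hwG : w ∈ G := ⟨hwF,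
        Metric.closedBall_subset_closedBall (by linarith) (Metric.ball_subset_closedBall hwb)⟩
      refine ⟨⟨w, hwG⟩, ?_, rfl⟩
      rw [← hOeq]
      exact hwO
  -- the saturation of A
  set At : Set (ℝ × ℝ) := ⋃ n : ℤ × ℤ, tr n A with hAtdef
  have hAtF : At ⊆ F := by
    intro w hw
    simp only [hAtdef, Set.mem_iUnion, htrdef, Set.mem_image] at hw
    obtain ⟨n, a, ha, rfl⟩ := hw
    exact hFinv n a (hAF ha)
  have hAtinv : ∀ (m : ℤ × ℤ) (w : ℝ × ℝ), w ∈ At → w + lat m ∈ At := by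
    intro m w hw
    simp only [hAtdef, Set.mem_iUnion, htrdef, Set.mem_image] at hw ⊢
    obtain ⟨n, a, ha, rfl⟩ := hw
    exact ⟨n + m, a, ha, by rw [lat_add, add_assoc]⟩
  have hD1closed : IsClosed (torusProj '' A) := (hAcomp.image continuous_proj).isClosed
  -- F = At
  have hFAt : F = At := by
    refine Set.Subset.antisymm ?_ hAtF
    by_contra hns
    obtain ⟨f0, hf0F, hf0A⟩ := Set.not_subset.1 hns
    have hD2pre : torusProj ⁻¹' (torusProj '' (F \ At)) = F \ At := by
      apply Set.Subset.antisymm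
      · rintro w hw
        obtain ⟨u, hu, hpu⟩ := hw
        obtain ⟨n, rfl⟩ := (proj_eq_iff w u).1 hpu.symm
        refine ⟨hFinv n u hu.1, fun hc => hu.2 ?_⟩
        have := hAtinv (-n) _ hc
        rwa [add_assoc, ← lat_add, add_neg_cancel, lat_zero, add_zero] at this
      · exact Set.subset_preimage_image _ _
    have hsdiff : IsClosed (F \ At) := by
      have hAteq : At = F ∩ ⋃ n : ℤ × ℤ, tr n (O ∩ Metric.ball z R) := by
        ext w
        simp only [hAtdef, Set.mem_iUnion, htrdef, Set.mem_image, Set.mem_inter_iff]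
        constructor
        · rintro ⟨n, a, ha, rfl⟩
          have haA : a ∈ F ∩ (O ∩ Metric.ball z R) := hAeq ▸ ha
          exact ⟨hFinv n a haA.1, n, a, haA.2, rfl⟩
        · rintro ⟨hwF, n, o, ho, rfl⟩
          have hoF : o ∈ F := by
            have := hFinv (-n) _ hwF
            rwa [add_assoc, ← lat_add, add_neg_cancel, lat_zero, add_zero] at this
          exact ⟨n, o, hAeq ▸ ⟨hoF, ho⟩, rfl⟩
      have hOOopen : IsOpen (⋃ n : ℤ × ℤ, tr n (O ∩ Metric.ball z R)) :=
        isOpen_iUnion fun n => htr_open n _ (hOopen.inter Metric.isOpen_ball)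
      have : F \ At = F ∩ (⋃ n : ℤ × ℤ, tr n (O ∩ Metric.ball z R))ᶜ := by
        rw [hAteq]
        ext w
        simp only [Set.mem_diff, Set.mem_inter_iff, Set.mem_compl_iff, not_and]
        tauto
      rw [this]
      exact hFclosed.inter hOOopen.isClosed_compl
    have hD2closed : IsClosed (torusProj '' (F \ At)) := by
      rw [← quotientMap_proj.isClosed_preimage, hD2pre]
      exact hsdiff
    have hdisj : Disjoint (torusProj '' A) (torusProj '' (F \ At)) := by
      rw [Set.disjoint_left]
      rintro c ⟨a, ha, rfl⟩ ⟨u, hu, hpu⟩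
      obtain ⟨n, rfl⟩ := (proj_eq_iff u a).1 hpu
      refine hu.2 ?_
      simp only [hAtdef, Set.mem_iUnion, htrdef, Set.mem_image]
      exact ⟨n, a, ha, rfl⟩
    have hcover : C ⊆ torusProj '' A ∪ torusProj '' (F \ At) := by
      intro c hc
      obtain ⟨f, rfl⟩ := surjective_proj c
      have hfF : f ∈ F := hc
      by_cases hf : f ∈ At
      · simp only [hAtdef, Set.mem_iUnion, htrdef, Set.mem_image] at hf
        obtain ⟨n, a, ha, rfl⟩ := hf
        exact Or.inl ⟨a, ha, (proj_add a n).symm⟩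
      · exact Or.inr ⟨f, ⟨hfF, hf⟩, rfl⟩
    have hxD1 : x ∈ torusProj '' A := ⟨z, hzA, hzx⟩
    have hD2ne : (torusProj '' (F \ At)).Nonempty := ⟨_, ⟨f0, ⟨hf0F, hf0A⟩, rfl⟩⟩
    have h1 : C ⊆ (torusProj '' (F \ At))ᶜ ∪ (torusProj '' A)ᶜ := by
      intro c hc
      by_cases h : c ∈ torusProj '' (F \ At)
      · exact Or.inr (fun hc1 => Set.disjoint_left.1 hdisj hc1 h)
      · exact Or.inl h
    have h2 : (C ∩ (torusProj '' (F \ At))ᶜ).Nonempty :=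
      ⟨x, hxC, fun hx2 => Set.disjoint_left.1 hdisj hxD1 hx2⟩
    have h3 : (C ∩ (torusProj '' A)ᶜ).Nonempty := by
      obtain ⟨c, hc⟩ := hD2ne
      refine ⟨c, ?_, fun hc1 => Set.disjoint_left.1 hdisj hc1 hc⟩
      obtain ⟨u, hu, rfl⟩ := hc
      exact hu.1
    obtain ⟨c, hcC, hc2, hc1⟩ := hCconn.isPreconnected _ _
      (isOpen_compl_iff.2 hD2closed) (isOpen_compl_iff.2 hD1closed) h1 h2 h3
    exact (hcover hcC).elim (fun h => hc1 h) (fun h => hc2 h)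
  -- the open saturated neighborhood
  set W : Set (ℝ × ℝ) := ⋃ n : ℤ × ℤ, tr n (Metric.thickening ε A) with hWdef
  have hWopen : IsOpen W := isOpen_iUnion fun n => htr_open n _ Metric.isOpen_thickening
  have hFW : F ⊆ W := by
    rw [hFAt]
    intro w hw
    simp only [hAtdef, Set.mem_iUnion, htrdef, Set.mem_image] at hw
    simp only [hWdef, Set.mem_iUnion, htrdef, Set.mem_image]
    obtain ⟨n, a, ha, rfl⟩ := hw
    exact ⟨n, a, Metric.self_subset_thickening hεpos A ha, rfl⟩
  have hWinv : ∀ (m : ℤ × ℤ) (w : ℝ × ℝ), w ∈ W → w + lat m ∈ W := by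
    intro m w hw
    simp only [hWdef, Set.mem_iUnion, htrdef, Set.mem_image] at hw ⊢
    obtain ⟨n, a, ha, rfl⟩ := hw
    exact ⟨n + m, a, ha, by rw [lat_add, add_assoc]⟩
  have htrdisj : ∀ n m : ℤ × ℤ, n ≠ m →
      Disjoint (tr n (Metric.thickening ε A)) (tr m (Metric.thickening ε A)) := by
    intro n m hnm
    rw [Set.disjoint_left]
    rintro w ⟨a1, ha1, rfl⟩ ⟨a2, ha2, heq⟩
    obtain ⟨b1, hb1, hd1⟩ := Metric.mem_thickening_iff.1 ha1
    obtain ⟨b2, hb2, hd2⟩ := Metric.mem_thickening_iff.1 ha2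
    obtain ⟨k1, hk1, he1⟩ := Metric.mem_thickening_iff.1 (hAK hb1).1
    obtain ⟨k2, hk2, he2⟩ := Metric.mem_thickening_iff.1 (hAK hb2).1
    have hda : dist a1 k1 < 2 * ε := lt_of_le_of_lt (dist_triangle a1 b1 k1) (by linarith)
    have hdb : dist a2 k2 < 2 * ε := lt_of_le_of_lt (dist_triangle a2 b2 k2) (by linarith)
    have hkey : dist (k1 + lat n) (k2 + lat m) < δ := by
      have heq' : a2 + lat m = a1 + lat n := heq
      have t0 : dist (a1 + lat n) (k2 + lat m) = dist (a2 + lat m) (k2 + lat m) := by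
        rw [heq']
      calc dist (k1 + lat n) (k2 + lat m)
          ≤ dist (k1 + lat n) (a1 + lat n) + dist (a1 + lat n) (k2 + lat m) :=
            dist_triangle _ _ _
        _ ≤ dist (k1 + lat n) (a1 + lat n) + dist (a2 + lat m) (k2 + lat m) := by linarith
        _ = dist k1 a1 + dist a2 k2 := by rw [dist_add_right, dist_add_right]
        _ < 2 * ε + 2 * ε := by rw [dist_comm k1 a1]; linarith
        _ = δ := by rw [hεdef]; ring
    have hfin : dist (k1 + lat n) (k2 + lat m) = dist k1 (k2 + lat (m - n)) := by
      have hh : k2 + lat m = k2 + lat (m - n) + lat n := by rw [add_assoc, lat_sub_add]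
      rw [hh, dist_add_right]
    have hge := hP (m - n) (sub_ne_zero.2 (Ne.symm hnm)) k1 hk1 k2 hk2
    rw [hfin] at hkey
    linarith
  set U : Set Torus2 := torusProj '' W with hUdef
  have hUopen : IsOpen U := isOpenMap_proj W hWopen
  have hpreU : torusProj ⁻¹' U = W := by
    apply Set.Subset.antisymm
    · rintro w hw
      obtain ⟨u, hu, hpu⟩ := hw
      obtain ⟨n, rfl⟩ := (proj_eq_iff w u).1 hpu.symm
      exact hWinv n u hu
    · exact Set.subset_preimage_image _ _
  have hCU : C ⊆ U := by
    intro c hc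
    obtain ⟨f, rfl⟩ := surjective_proj c
    exact ⟨f, hFW hc, rfl⟩
  have hWbdd : ∀ w ∈ W, Bornology.IsBounded (connectedComponentIn W w) := by
    intro w hw
    have hw' : w ∈ ⋃ n : ℤ × ℤ, tr n (Metric.thickening ε A) := hw
    obtain ⟨n, hn⟩ := Set.mem_iUnion.1 hw'
    have hsub : connectedComponentIn W w ⊆ tr n (Metric.thickening ε A) := by
      have hu : IsOpen (tr n (Metric.thickening ε A)) := htr_open n _ Metric.isOpen_thickening
      have hv : IsOpen (⋃ m ∈ {m : ℤ × ℤ | m ≠ n}, tr m (Metric.thickening ε A)) :=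
        isOpen_biUnion fun m _ => htr_open m _ Metric.isOpen_thickening
      have hdisj2 : Disjoint (tr n (Metric.thickening ε A))
          (⋃ m ∈ {m : ℤ × ℤ | m ≠ n}, tr m (Metric.thickening ε A)) := by
        rw [Set.disjoint_left]
        intro y hy1 hy2
        obtain ⟨m, hm, hym⟩ := Set.mem_iUnion₂.1 hy2
        exact Set.disjoint_left.1 (htrdisj n m (Ne.symm hm)) hy1 hym
      have hWuv : connectedComponentIn W w ⊆
          tr n (Metric.thickening ε A) ∪
            ⋃ m ∈ {m : ℤ × ℤ | m ≠ n}, tr m (Metric.thickening ε A) := by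
        intro y hy
        have hyW : y ∈ ⋃ n : ℤ × ℤ, tr n (Metric.thickening ε A) :=
          connectedComponentIn_subset W w hy
        obtain ⟨m, hm⟩ := Set.mem_iUnion.1 hyW
        by_cases hmn : m = n
        · exact Or.inl (hmn ▸ hm)
        · exact Or.inr (Set.mem_iUnion₂.2 ⟨m, hmn, hm⟩)
      exact IsPreconnected.subset_left_of_subset_union hu hv hdisj2 hWuv
        ⟨w, mem_connectedComponentIn hw', hn⟩ isPreconnected_connectedComponentIn
    have hbd : Bornology.IsBounded (tr n (Metric.thickening ε A)) := by
      have h1 : Bornology.IsBounded (Metric.thickening ε A) := hAcomp.isBounded.thickening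
      obtain ⟨ρ, hρ⟩ := h1.subset_closedBall z
      have hsub2 : tr n (Metric.thickening ε A) ⊆ Metric.closedBall (z + lat n) ρ := by
        rintro _ ⟨a, ha, rfl⟩
        rw [Metric.mem_closedBall, dist_add_right]
        exact hρ ha
      exact Metric.isBounded_closedBall.subset hsub2
    exact hbd.subset hsub
  refine ⟨(Quotient.mk S '' Uᶜ)ᶜ, ?_, ?_, ?_⟩
  · intro q' hq'
    simp only [Set.mem_setOf_eq]
    have hclsub : torusProj ⁻¹' (Quotient.mk S ⁻¹' {q'}) ⊆ W := by
      intro w hw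
      rw [← hpreU]
      by_contra hwU
      exact hq' ⟨torusProj w, hwU, hw⟩
    intro w hw
    exact (hWbdd w (hclsub hw)).subset (connectedComponentIn_mono w hclsub)
  · exact isOpen_compl_iff.2 (husc.2 Uᶜ hUopen.isClosed_compl)
  · intro hqmem
    obtain ⟨y, hyU, hyq⟩ := hqmem
    refine hyU (hCU ?_)
    show y ∈ Quotient.mk S ⁻¹' {q}
    simpa using hyq
end

section
/- Let (T², T) be a flow on the two-torus and S a monotone, upper semicontinuous, T-invariant equivalence relation such that the quotient flow (T²/S, T) is minimal. If some equivalence class M ∈ T²/S is inessential, then every equivalence class of S is inessential. -/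
open Topology

/-- A loop `γ` in `𝕋²` is null-homotopic if it is (freely) homotopic to a constant. -/
def LoopNullHomotopic (γ : C(UnitAddCircle, Torus2)) : Prop :=
  ∃ c : Torus2, γ.Homotopic (ContinuousMap.const _ c)

/-- An open set `U ⊆ 𝕋²` is doubly essential if it contains two loops which are
homotopically nontrivial in `𝕋²` and not (freely) homotopic to each other in `𝕋²`. -/
def DoublyEssentialOpen (U : Set Torus2) : Prop :=
  ∃ γ₁ γ₂ : C(UnitAddCircle, Torus2), Set.range γ₁ ⊆ U ∧ Set.range γ₂ ⊆ U ∧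
    ¬ LoopNullHomotopic γ₁ ∧ ¬ LoopNullHomotopic γ₂ ∧ ¬ γ₁.Homotopic γ₂

/-- A closed set `M ⊆ 𝕋²` is inessential if its complement is doubly essential. -/
def InessentialClosed (M : Set Torus2) : Prop := DoublyEssentialOpen Mᶜ

/-!
Proof. Since the quotient map is closed, "the class avoids the compact set `K`" is an open
condition on the quotient. Take for `K` the two loops witnessing that the class of `x₀` is inessential;
by minimality the orbit of any class `[x]` meets this open set, say at `[t • x]`, so `[t • x]`
is inessential. Since `[x] = t⁻¹ • [t • x]` and the homeomorphism `t⁻¹ • ·` preserves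
homotopy classes of loops, `[x]` is inessential too.
-/

namespace ContinuousMap.Homotopic

variable {X Y : Type*} [TopologicalSpace X] [TopologicalSpace Y]

theorem homeomorph_comp_iff (e : Y ≃ₜ Y) {f₀ f₁ : C(X, Y)} :
    ((e : C(Y, Y)).comp f₀).Homotopic ((e : C(Y, Y)).comp f₁) ↔ f₀.Homotopic f₁ := by
  refine ⟨fun h => ?_, fun h => (refl _).comp h⟩
  simpa only [← comp_assoc, Homeomorph.symm_comp_toContinuousMap, id_comp] using
    (refl (e.symm : C(Y, Y))).comp h

end ContinuousMap.Homotopic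

theorem LoopNullHomotopic.comp {γ : C(UnitAddCircle, Torus2)} (h : LoopNullHomotopic γ)
    (f : C(Torus2, Torus2)) : LoopNullHomotopic (f.comp γ) := by
  obtain ⟨c, hc⟩ := h
  refine ⟨f c, ?_⟩
  simpa only [ContinuousMap.comp_const] using (ContinuousMap.Homotopic.refl f).comp hc

theorem loopNullHomotopic_homeomorph_comp_iff (e : Torus2 ≃ₜ Torus2)
    {γ : C(UnitAddCircle, Torus2)} :
    LoopNullHomotopic ((e : C(Torus2, Torus2)).comp γ) ↔ LoopNullHomotopic γ := by
  refine ⟨fun h => ?_, fun h => h.comp e⟩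
  simpa only [← ContinuousMap.comp_assoc, Homeomorph.symm_comp_toContinuousMap,
    ContinuousMap.id_comp] using h.comp e.symm

namespace DoublyEssentialOpen

theorem mono {U V : Set Torus2} (h : DoublyEssentialOpen U) (hUV : U ⊆ V) :
    DoublyEssentialOpen V := by
  obtain ⟨γ₁, γ₂, h₁, h₂, hn₁, hn₂, hne⟩ := h
  exact ⟨γ₁, γ₂, h₁.trans hUV, h₂.trans hUV, hn₁, hn₂, hne⟩

theorem exists_isCompact_subset {U : Set Torus2} (h : DoublyEssentialOpen U) :
    ∃ K ⊆ U, IsCompact K ∧ DoublyEssentialOpen K := by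
  obtain ⟨γ₁, γ₂, h₁, h₂, hn₁, hn₂, hne⟩ := h
  exact ⟨Set.range γ₁ ∪ Set.range γ₂, Set.union_subset h₁ h₂,
    (isCompact_range γ₁.continuous).union (isCompact_range γ₂.continuous),
    γ₁, γ₂, Set.subset_union_left, Set.subset_union_right, hn₁, hn₂, hne⟩

theorem image_homeomorph {U : Set Torus2} (h : DoublyEssentialOpen U) (e : Torus2 ≃ₜ Torus2) :
    DoublyEssentialOpen (e '' U) := by
  obtain ⟨γ₁, γ₂, h₁, h₂, hn₁, hn₂, hne⟩ := h
  refine ⟨(e : C(Torus2, Torus2)).comp γ₁, (e : C(Torus2, Torus2)).comp γ₂,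
    ?_, ?_, ?_, ?_, ?_⟩
  · rintro _ ⟨s, rfl⟩
    exact ⟨γ₁ s, h₁ ⟨s, rfl⟩, rfl⟩
  · rintro _ ⟨s, rfl⟩
    exact ⟨γ₂ s, h₂ ⟨s, rfl⟩, rfl⟩
  · rwa [loopNullHomotopic_homeomorph_comp_iff]
  · rwa [loopNullHomotopic_homeomorph_comp_iff]
  · rwa [ContinuousMap.Homotopic.homeomorph_comp_iff]

end DoublyEssentialOpen

theorem InessentialClosed.image_homeomorph {M : Set Torus2} (h : InessentialClosed M)
    (e : Torus2 ≃ₜ Torus2) : InessentialClosed (e '' M) := by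
  rw [InessentialClosed, ← e.image_compl]
  exact DoublyEssentialOpen.image_homeomorph h e

theorem stmt16_general {T : Type*} [TopologicalSpace T] [Group T]
    [MulAction T Torus2] [ContinuousSMul T Torus2]
    (S : Setoid Torus2)
    (husc : (∀ x : Torus2, IsCompact {y | S.r x y}) ∧ IsClosedMap (Quotient.mk S))
    (hinv : ∀ (t : T) (x : Torus2), (t • ·) '' {y | S.r x y} = {y | S.r (t • x) y})
    -- the quotient flow is minimal: the orbit of every point `⟦x⟧` of `𝕋²/S` is dense
    (hmin : ∀ x : Torus2, Dense (Set.range fun t : T => Quotient.mk S (t • x)))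
    (x₀ : Torus2) (hx₀ : InessentialClosed {y | S.r x₀ y}) :
    ∀ x : Torus2, InessentialClosed {y | S.r x y} := by
  intro x
  obtain ⟨K, hK₀, hK, hKess⟩ := DoublyEssentialOpen.exists_isCompact_subset hx₀
  have hx₀K : Quotient.mk S x₀ ∉ Quotient.mk S '' K :=
    fun ⟨y, hyK, hy⟩ => hK₀ hyK (S.symm (Quotient.exact hy))
  obtain ⟨_, ⟨t, rfl⟩, htK⟩ :=
    (hmin x).exists_mem_open (husc.2 K hK.isClosed).isOpen_compl ⟨_, hx₀K⟩
  have htx : InessentialClosed {y | S.r (t • x) y} :=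
    hKess.mono fun y hyK hy => htK ⟨y, hyK, Quotient.sound (S.symm hy)⟩
  rw [← inv_smul_smul t x, ← hinv]
  exact htx.image_homeomorph (Homeomorph.smul t⁻¹)

/-- Let `(𝕋², T)` be a flow on the two-torus (a topological group `T`
acting continuously) and `S` a monotone, upper semicontinuous, `T`-invariant
equivalence relation such that the quotient flow `(𝕋²/S, T)` is minimal (every orbit
is dense). If some equivalence class is inessential, then every equivalence class of
`S` is inessential. -/
theorem stmt16 {T : Type*} [TopologicalSpace T] [Group T] [IsTopologicalGroup T]
    [MulAction T Torus2] [ContinuousSMul T Torus2]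
    (S : Setoid Torus2)
    (hmono : ∀ x : Torus2, IsConnected {y | S.r x y})
    (husc : (∀ x : Torus2, IsCompact {y | S.r x y}) ∧ IsClosedMap (Quotient.mk S))
    (hinv : ∀ (t : T) (x : Torus2), (t • ·) '' {y | S.r x y} = {y | S.r (t • x) y})
    -- the quotient flow is minimal: the orbit of every point `⟦x⟧` of `𝕋²/S` is dense
    (hmin : ∀ x : Torus2, Dense (Set.range fun t : T => Quotient.mk S (t • x)))
    (x₀ : Torus2) (hx₀ : InessentialClosed {y | S.r x₀ y}) :
    ∀ x : Torus2, InessentialClosed {y | S.r x y} :=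
  stmt16_general S husc hinv hmin x₀ hx₀
end
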